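/- arXiv:1107.0096 — 5 statements merged into one kernel-verified Lean document; each statement's English description precedes it below -/
import Mathlib

section
/- Let T > 0, ε ∈ [0,1), let φ : [0,T] → [0,∞) be continuous, let K : [0,T] → ℝ^{m×m} and B : [0,T] → ℝ^{m×d} be continuous matrix-valued functions, and let B₀ be a constant real m×d matrix. Assume: (i) ⟨B(s)B₀* a, a⟩ ≥ −ε|B₀* a|² for all a ∈ ℝᵐ and s ∈ [0,T]; (ii) there is an increasing continuous function ξ : [0,T] → ℝ with ξ(t) > 0 for t ∈ (0,T] such that ⟨(∫₀ᵗ φ(s) K(s)B₀B₀*K(s)* ds) a, a⟩ ≥ ξ(t)|a|² for all a ∈ ℝᵐ and t ∈ (0,T]. Then for every t ∈ (0,T] the matrix Q_t := ∫₀ᵗ φ(s) K(s)(B₀ + B(s))B₀* K(s)* ds is invertible and satisfies ‖Q_t⁻¹‖ ≤ 1/((1−ε)ξ(t)). -/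
open scoped RealInnerProductSpace

set_option maxHeartbeats 1000000 in
/-- Theorem 1.2(1) of the paper, deterministic content.
Under the domination condition `⟨B(s)B₀* a, a⟩ ≥ −ε|B₀* a|²` and the lower bound
`∫₀ᵗ φ(s) K(s)B₀B₀*K(s)* ds ≥ ξ(t) I`, the matrix
`Q_t = ∫₀ᵗ φ(s) K(s)(B₀ + B(s))B₀*K(s)* ds` is invertible for `t ∈ (0,T]` with
`‖Q_t⁻¹‖ ≤ 1/((1−ε)ξ(t))`. -/
theorem stmt1 (m d : ℕ) (T ε : ℝ) (hT : 0 < T) (hε0 : 0 ≤ ε) (hε1 : ε < 1)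
    (φ : ℝ → ℝ) (hφc : ContinuousOn φ (Set.Icc 0 T))
    (hφ0 : ∀ s ∈ Set.Icc (0:ℝ) T, 0 ≤ φ s)
    (K : ℝ → EuclideanSpace ℝ (Fin m) →L[ℝ] EuclideanSpace ℝ (Fin m))
    (hK : ContinuousOn K (Set.Icc 0 T))
    (B : ℝ → EuclideanSpace ℝ (Fin d) →L[ℝ] EuclideanSpace ℝ (Fin m))
    (hB : ContinuousOn B (Set.Icc 0 T))
    (B₀ : EuclideanSpace ℝ (Fin d) →L[ℝ] EuclideanSpace ℝ (Fin m))
    (hdom : ∀ s ∈ Set.Icc (0:ℝ) T, ∀ a : EuclideanSpace ℝ (Fin m),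
      -ε * ‖B₀.adjoint a‖ ^ 2 ≤ ⟪B s (B₀.adjoint a), a⟫)
    (ξ : ℝ → ℝ) (hξc : ContinuousOn ξ (Set.Icc 0 T))
    (hξmono : MonotoneOn ξ (Set.Icc 0 T))
    (hξpos : ∀ t ∈ Set.Ioc (0:ℝ) T, 0 < ξ t)
    (hlow : ∀ t ∈ Set.Ioc (0:ℝ) T, ∀ a : EuclideanSpace ℝ (Fin m),
      ξ t * ‖a‖ ^ 2 ≤
        ⟪(∫ s in (0:ℝ)..t,
            φ s • (((K s).comp B₀).comp (B₀.adjoint.comp (K s).adjoint))) a, a⟫) :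
    ∀ t ∈ Set.Ioc (0:ℝ) T,
      ∃ N : EuclideanSpace ℝ (Fin m) →L[ℝ] EuclideanSpace ℝ (Fin m),
        (∫ s in (0:ℝ)..t,
            φ s • (((K s).comp (B₀ + B s)).comp (B₀.adjoint.comp (K s).adjoint))).comp N
          = ContinuousLinearMap.id ℝ (EuclideanSpace ℝ (Fin m)) ∧
        N.comp (∫ s in (0:ℝ)..t,
            φ s • (((K s).comp (B₀ + B s)).comp (B₀.adjoint.comp (K s).adjoint)))
          = ContinuousLinearMap.id ℝ (EuclideanSpace ℝ (Fin m)) ∧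
        ‖N‖ ≤ 1 / ((1 - ε) * ξ t) := by
  intro t ht
  set E := EuclideanSpace ℝ (Fin m) with hE
  set g : ℝ → E →L[ℝ] E :=
    fun s => φ s • (((K s).comp (B₀ + B s)).comp (B₀.adjoint.comp (K s).adjoint)) with hg
  set f : ℝ → E →L[ℝ] E :=
    fun s => φ s • (((K s).comp B₀).comp (B₀.adjoint.comp (K s).adjoint)) with hf
  have hsub : Set.uIcc (0:ℝ) t ⊆ Set.Icc 0 T := by
    rw [Set.uIcc_of_le ht.1.le]; exact Set.Icc_subset_Icc le_rfl ht.2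
  have hgc : ContinuousOn g (Set.Icc 0 T) := by fun_prop
  have hfc : ContinuousOn f (Set.Icc 0 T) := by fun_prop
  have hgi : IntervalIntegrable g MeasureTheory.volume 0 t :=
    (hgc.mono hsub).intervalIntegrable
  have hfi : IntervalIntegrable f MeasureTheory.volume 0 t :=
    (hfc.mono hsub).intervalIntegrable
  set Q : E →L[ℝ] E := ∫ s in (0:ℝ)..t, g s with hQ
  set P : E →L[ℝ] E := ∫ s in (0:ℝ)..t, f s with hP
  have hone : 0 < 1 - ε := by linarith
  have c_pos : 0 < (1 - ε) * ξ t := mul_pos hone (hξpos t ht)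
  set c := (1 - ε) * ξ t with hc
  -- swap lemma
  have hswap : ∀ (h : ℝ → E →L[ℝ] E), IntervalIntegrable h MeasureTheory.volume 0 t →
      ContinuousOn h (Set.Icc 0 T) → ∀ a : E,
      ⟪(∫ s in (0:ℝ)..t, h s) a, a⟫ = ∫ s in (0:ℝ)..t, ⟪h s a, a⟫ := by
    intro h hi hcont a
    have hia : IntervalIntegrable (fun s => h s a) MeasureTheory.volume 0 t := by
      apply ContinuousOn.intervalIntegrable
      exact (ContinuousLinearMap.apply ℝ E a).continuous.comp_continuousOn (hcont.mono hsub)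
    calc ⟪(∫ s in (0:ℝ)..t, h s) a, a⟫
        = (innerSL ℝ a) (∫ s in (0:ℝ)..t, h s a) := by
          rw [ContinuousLinearMap.intervalIntegral_apply hi]
          simp [real_inner_comm]
      _ = ∫ s in (0:ℝ)..t, (innerSL ℝ a) (h s a) :=
          ((innerSL ℝ a).intervalIntegral_comp_comm hia).symm
      _ = ∫ s in (0:ℝ)..t, ⟪h s a, a⟫ := by
          simp [real_inner_comm]
  -- coercivity of Q
  have coercive : ∀ a : E, c * ‖a‖ ^ 2 ≤ ⟪Q a, a⟫ := by
    intro a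
    have hQa : ⟪Q a, a⟫ = ∫ s in (0:ℝ)..t, ⟪g s a, a⟫ := hswap g hgi hgc a
    have hPa : ⟪P a, a⟫ = ∫ s in (0:ℝ)..t, ⟪f s a, a⟫ := hswap f hfi hfc a
    have key : ∀ s ∈ Set.Icc (0:ℝ) t, (1 - ε) * ⟪f s a, a⟫ ≤ ⟪g s a, a⟫ := by
      intro s hs
      have hsT : s ∈ Set.Icc (0:ℝ) T := ⟨hs.1, hs.2.trans ht.2⟩
      set b := (K s).adjoint a with hb
      have hga : ⟪g s a, a⟫
          = φ s * (‖B₀.adjoint b‖ ^ 2 + ⟪B s (B₀.adjoint b), b⟫) := by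
        simp only [hg, ContinuousLinearMap.smul_apply, ContinuousLinearMap.comp_apply,
          ContinuousLinearMap.add_apply, real_inner_smul_left]
        rw [← ContinuousLinearMap.adjoint_inner_right (K s)]
        rw [inner_add_left, ← ContinuousLinearMap.adjoint_inner_right B₀,
          real_inner_self_eq_norm_sq]
      have hfa : ⟪f s a, a⟫ = φ s * ‖B₀.adjoint b‖ ^ 2 := by
        simp only [hf, ContinuousLinearMap.smul_apply, ContinuousLinearMap.comp_apply,
          real_inner_smul_left]
        rw [← ContinuousLinearMap.adjoint_inner_right (K s),
          ← ContinuousLinearMap.adjoint_inner_right B₀, real_inner_self_eq_norm_sq]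
      rw [hga, hfa]
      have hdb := hdom s hsT b
      have hφs := hφ0 s hsT
      nlinarith [sq_nonneg ‖B₀.adjoint b‖, mul_nonneg hφs (sq_nonneg ‖B₀.adjoint b‖)]
    have int1 : IntervalIntegrable (fun s => ⟪g s a, a⟫) MeasureTheory.volume 0 t := by
      apply ContinuousOn.intervalIntegrable
      exact ((innerSL ℝ a).continuous.comp_continuousOn
        ((ContinuousLinearMap.apply ℝ E a).continuous.comp_continuousOn
          (hgc.mono hsub))).congr (fun s _ => (real_inner_comm _ _).symm)
    have int2 : IntervalIntegrable (fun s => (1 - ε) * ⟪f s a, a⟫) MeasureTheory.volume 0 t := by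
      apply ContinuousOn.intervalIntegrable
      exact continuousOn_const.mul
        (((innerSL ℝ a).continuous.comp_continuousOn
          ((ContinuousLinearMap.apply ℝ E a).continuous.comp_continuousOn
            (hfc.mono hsub))).congr (fun s _ => (real_inner_comm _ _).symm))
    have hmono : (∫ s in (0:ℝ)..t, (1 - ε) * ⟪f s a, a⟫)
        ≤ ∫ s in (0:ℝ)..t, ⟪g s a, a⟫ :=
      intervalIntegral.integral_mono_on ht.1.le int2 int1 key
    have hQP : (1 - ε) * ⟪P a, a⟫ ≤ ⟪Q a, a⟫ := by
      rw [hQa, hPa, ← intervalIntegral.integral_const_mul]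
      exact hmono
    calc c * ‖a‖ ^ 2 = (1 - ε) * (ξ t * ‖a‖ ^ 2) := by ring
      _ ≤ (1 - ε) * ⟪P a, a⟫ :=
          mul_le_mul_of_nonneg_left (hlow t ht a) hone.le
      _ ≤ ⟪Q a, a⟫ := hQP
  -- lower bound on ‖Q a‖
  have hlb : ∀ a : E, c * ‖a‖ ≤ ‖Q a‖ := by
    intro a
    rcases eq_or_ne a 0 with rfl | ha
    · simp
    · have h1 : c * ‖a‖ ^ 2 ≤ ‖Q a‖ * ‖a‖ :=
        (coercive a).trans (real_inner_le_norm _ _)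
      have h2 : 0 < ‖a‖ := norm_pos_iff.mpr ha
      rw [sq] at h1
      nlinarith
  have hinj : Function.Injective Q := by
    intro x y hxy
    have h0 : Q (x - y) = 0 := by rw [map_sub, hxy, sub_self]
    have h := hlb (x - y)
    rw [h0, norm_zero] at h
    have hle : ‖x - y‖ ≤ 0 := by nlinarith [norm_nonneg (x - y)]
    have := le_antisymm hle (norm_nonneg _)
    rwa [norm_eq_zero, sub_eq_zero] at this
  have hbij : Function.Bijective Q :=
    ⟨hinj, (LinearMap.injective_iff_surjective (f := (Q : E →ₗ[ℝ] E))).mp hinj⟩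
  set e := (LinearEquiv.ofBijective (Q : E →ₗ[ℝ] E) hbij).toContinuousLinearEquiv with he
  have heQ : ∀ x, (e : E → E) x = Q x := fun x => rfl
  refine ⟨(e.symm : E →L[ℝ] E), ?_, ?_, ?_⟩
  · refine ContinuousLinearMap.ext fun x => ?_
    have h1 : Q ((e.symm : E →L[ℝ] E) x) = x := by
      rw [← heQ]; exact e.apply_symm_apply x
    simpa using h1
  · refine ContinuousLinearMap.ext fun x => ?_
    have h1 : (e.symm : E →L[ℝ] E) (Q x) = x := by
      show e.symm (Q x) = x
      rw [← heQ]; exact e.symm_apply_apply x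
    simpa using h1
  · apply ContinuousLinearMap.opNorm_le_bound _ (by positivity)
    intro v
    have hQe : Q ((e.symm : E →L[ℝ] E) v) = v := by
      rw [← heQ]; exact e.apply_symm_apply v
    have hlv := hlb ((e.symm : E →L[ℝ] E) v)
    rw [hQe] at hlv
    rw [div_mul_eq_mul_div, le_div_iff₀ c_pos, one_mul]
    linarith
end

section
/- Let T > 0, v⁽¹⁾ ∈ ℝᵐ, v⁽²⁾ ∈ ℝᵈ. Let 𝒦 : [0,T] → ℝ^{m×m} and N : [0,T] → ℝ^{m×d} be continuous, let B₀ ∈ ℝ^{m×d} be constant, and let φ ∈ C¹([0,T]) satisfy φ(0) = φ(T) = 0. Let ξ : [0,T] → ℝ be continuous and increasing with ξ(t) > 0 for t ∈ (0,T]. Set Q_t := ∫₀ᵗ φ(s) 𝒦(s)N(s)B₀* 𝒦(s)* ds and assume that Q_t is invertible for every t ∈ (0,T] with ‖Q_t⁻¹‖ ≤ c/ξ(t) for some constant c > 0. Define, for t ∈ [0,T], α_t := ((T−t)/T) v⁽²⁾ − φ(t) B₀* 𝒦(t)* Q_T⁻¹ ∫₀ᵀ ((T−s)/T) 𝒦(s)N(s)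 v⁽²⁾ ds − (φ(t) B₀* 𝒦(t)* / ∫₀ᵀ ξ(s)² ds) ∫ₜᵀ ξ(s)² Q_s⁻¹ 𝒦(0)v⁽¹⁾ ds. Then α₀ = v⁽²⁾, α_T = 0, and 𝒦(0)v⁽¹⁾ + ∫₀ᵀ 𝒦(t)N(t) α_t dt = 0. -/
/-!
Write `M := Q'` for the integrand of `Q_t`, `u := 𝒦(0)v⁽¹⁾` and `R_t := ∫ₜᵀ ξ(s)² Q_s⁻¹ u ds`.
Substituting the formula for `α`, the first two terms of `∫₀ᵀ 𝒦 N α` cancel because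
`∫₀ᵀ M = Q_T`, while integrating by parts (`Q_0 = 0`, `R_T = 0`) gives
`∫₀ᵀ M_t R_t dt = ∫₀ᵀ Q_t ξ(t)² Q_t⁻¹ u dt = (∫₀ᵀ ξ²) u`, which cancels `u`.
Although `Q_s⁻¹` may blow up as `s → 0`, the bound `‖ξ(s)² Q_s⁻¹‖ ≤ c ξ(s) ≤ c ξ(T)` keeps the
integrand of `R` bounded, hence integrable.
-/

open MeasureTheory Set intervalIntegral Filter

theorem ContinuousOn.inv_of_mul_eq_one {X R : Type*} [TopologicalSpace X] [NormedRing R]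
    [HasSummableGeomSeries R] {s : Set X} {Q P : X → R} (hQ : ContinuousOn Q s)
    (hP : ∀ x ∈ s, Q x * P x = 1 ∧ P x * Q x = 1) : ContinuousOn P s := by
  have hinv : ∀ x ∈ s, Ring.inverse (Q x) = P x := fun x hx =>
    Ring.inverse_unit ⟨Q x, P x, (hP x hx).1, (hP x hx).2⟩
  intro x hx
  let v : Rˣ := ⟨Q x, P x, (hP x hx).1, (hP x hx).2⟩
  exact ((NormedRing.inverse_continuousAt v).comp_continuousWithinAt (f := Q) (hQ x hx)).congr
    (fun y hy => (hinv y hy).symm) (hinv x hx).symm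

section

variable {E F : Type*} [NormedAddCommGroup E] [NormedSpace ℝ E]
  [NormedAddCommGroup F] [NormedSpace ℝ F]

theorem MeasureTheory.IntegrableOn.clm_apply_of_continuousOn {X : Type*} [TopologicalSpace X]
    [SecondCountableTopology X] [MeasurableSpace X] [OpensMeasurableSpace X] {μ : Measure X}
    {K A : Set X} {P : X → E →L[ℝ] F} {g : X → E} (hg : IntegrableOn g A μ)
    (hP : ContinuousOn P K) (hK : IsCompact K) (hA : MeasurableSet A) (hAK : A ⊆ K) :
    IntegrableOn (fun x => P x (g x)) A μ := by
  obtain ⟨C, hC⟩ := hK.exists_bound_of_continuousOn hP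
  refine Integrable.mono' (hg.norm.const_mul C) ?_ ?_
  · exact (continuous_fst.clm_apply continuous_snd).comp_aestronglyMeasurable₂
      ((hP.mono hAK).aestronglyMeasurable hA) hg.aestronglyMeasurable
  · exact (ae_restrict_iff' hA).2 (Eventually.of_forall fun x hx =>
      (P x).le_of_opNorm_le (hC x (hAK hx)) (g x))

theorem integrableOn_sq_smul_apply_of_norm_le_div {a b c : ℝ} (hc : 0 ≤ c) {ξ : ℝ → ℝ}
    (hξc : ContinuousOn ξ (Ioc a b)) (hξmono : MonotoneOn ξ (Ioc a b))
    (hξpos : ∀ t ∈ Ioc a b, 0 < ξ t) {P : ℝ → E →L[ℝ] F} (hPc : ContinuousOn P (Ioc a b))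
    (hP : ∀ t ∈ Ioc a b, ‖P t‖ ≤ c / ξ t) (u : E) :
    IntegrableOn (fun t => ξ t ^ 2 • P t u) (Ioc a b) := by
  refine Integrable.mono' (g := fun _ => c * ξ b * ‖u‖) (integrableOn_const measure_Ioc_lt_top.ne)
    (((hξc.pow 2).smul (hPc.clm_apply continuousOn_const)).aestronglyMeasurable measurableSet_Ioc)
    ((ae_restrict_iff' measurableSet_Ioc).2 (Eventually.of_forall fun t ht => ?_))
  have hb : b ∈ Ioc a b := ⟨ht.1.trans_le ht.2, le_rfl⟩
  have hξt := hξpos t ht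
  calc ‖ξ t ^ 2 • P t u‖ ≤ ξ t ^ 2 * (c / ξ t * ‖u‖) := by
        rw [norm_smul, Real.norm_of_nonneg (sq_nonneg _)]
        gcongr
        exact (P t).le_of_opNorm_le (hP t ht) u
    _ = c * ξ t * ‖u‖ := by field_simp
    _ ≤ c * ξ b * ‖u‖ := by gcongr; exact hξmono ht hb ht.2

theorem continuousOn_integral_left_of_integrableOn_Ioc {a b : ℝ} (hab : a ≤ b) {f : ℝ → E}
    (hf : IntegrableOn f (Ioc a b)) : ContinuousOn (fun t => ∫ s in t..b, f s) (Icc a b) := by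
  have h := continuousOn_primitive_interval_left (μ := volume) (f := f) (a := a) (b := b)
    (by rwa [uIcc_of_le hab, integrableOn_Icc_iff_integrableOn_Ioc])
  rwa [uIcc_of_le hab] at h

variable [CompleteSpace E] [CompleteSpace F]

theorem integral_apply_integral_eq_integral_primitive_apply {a b : ℝ} (hab : a ≤ b)
    {M : ℝ → E →L[ℝ] F} (hM : ContinuousOn M (Icc a b)) {f : ℝ → E}
    (hf : IntegrableOn f (Ioc a b)) (hfc : ContinuousOn f (Ioo a b)) :
    ∫ t in a..b, M t (∫ s in t..b, f s) = ∫ t in a..b, (∫ s in a..t, M s) (f t) := by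
  set Q := fun t => ∫ s in a..t, M s
  set R := fun t => ∫ s in t..b, f s
  have hQc : ContinuousOn Q (Icc a b) := by
    simpa only [uIcc_of_le hab] using continuousOn_primitive_interval'
      (hM.intervalIntegrable_of_Icc hab) left_mem_uIcc
  have hRc : ContinuousOn R (Icc a b) := continuousOn_integral_left_of_integrableOn_Ioc hab hf
  have hderiv : ∀ t ∈ Ioo a b, HasDerivAt (fun t => Q t (R t)) (M t (R t) - Q t (f t)) t := by
    intro t ht
    have hQd : HasDerivAt Q (M t) t := integral_hasDerivAt_right
      ((hM.mono (Icc_subset_Icc le_rfl ht.2.le)).intervalIntegrable_of_Icc ht.1.le)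
      ((hM.mono Ioo_subset_Icc_self).stronglyMeasurableAtFilter isOpen_Ioo t ht)
      ((hM t (Ioo_subset_Icc_self ht)).continuousAt (Icc_mem_nhds ht.1 ht.2))
    have hRd : HasDerivAt R (-f t) t := integral_hasDerivAt_left
      ((intervalIntegrable_iff_integrableOn_Ioc_of_le ht.2.le).2
        (hf.mono_set (Ioc_subset_Ioc ht.1.le le_rfl)))
      (hfc.stronglyMeasurableAtFilter isOpen_Ioo t ht)
      ((hfc t ht).continuousAt (isOpen_Ioo.mem_nhds ht))
    simpa only [map_neg, ← sub_eq_add_neg] using hQd.clm_apply hRd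
  have hMR : IntervalIntegrable (fun t => M t (R t)) volume a b :=
    (hM.clm_apply hRc).intervalIntegrable_of_Icc hab
  have hQf : IntervalIntegrable (fun t => Q t (f t)) volume a b :=
    (intervalIntegrable_iff_integrableOn_Ioc_of_le hab).2
      (hf.clm_apply_of_continuousOn hQc isCompact_Icc measurableSet_Ioc Ioc_subset_Icc_self)
  have hFTC := integral_eq_sub_of_hasDeriv_right_of_le hab (hQc.clm_apply hRc)
    (fun t ht => (hderiv t ht).hasDerivWithinAt) (hMR.sub hQf)
  rw [integral_sub hMR hQf] at hFTC
  simpa [Q, R, sub_eq_zero] using hFTC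

theorem continuousOn_of_primitive_mul_eq_one {a b : ℝ} (hab : a ≤ b) {M P : ℝ → E →L[ℝ] E}
    (hM : ContinuousOn M (Icc a b))
    (hP : ∀ t ∈ Ioc a b, (∫ s in a..t, M s) * P t = 1 ∧ P t * (∫ s in a..t, M s) = 1) :
    ContinuousOn P (Ioc a b) := by
  refine ContinuousOn.inv_of_mul_eq_one ?_ hP
  refine (continuousOn_primitive_interval' (hM.intervalIntegrable_of_Icc hab) left_mem_uIcc).mono ?_
  rw [uIcc_of_le hab]
  exact Ioc_subset_Icc_self

theorem integral_apply_integral_smul_apply_eq_smul {a b : ℝ} (hab : a ≤ b) {M P : ℝ → E →L[ℝ] E}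
    (hM : ContinuousOn M (Icc a b))
    (hP : ∀ t ∈ Ioc a b, (∫ s in a..t, M s) * P t = 1 ∧ P t * (∫ s in a..t, M s) = 1)
    {g : ℝ → ℝ} (hg : ContinuousOn g (Ioo a b)) {u : E}
    (hf : IntegrableOn (fun t => g t • P t u) (Ioc a b)) :
    ∫ t in a..b, M t (∫ s in t..b, g s • P s u) = (∫ t in a..b, g t) • u := by
  have hPc := (continuousOn_of_primitive_mul_eq_one hab hM hP).mono Ioo_subset_Ioc_self
  rw [integral_apply_integral_eq_integral_primitive_apply hab hM hf
    (hg.smul (hPc.clm_apply continuousOn_const)), ← intervalIntegral.integral_smul_const]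
  refine integral_congr_ae (Eventually.of_forall fun t ht => ?_)
  rw [uIoc_of_le hab] at ht
  rw [map_smul, ← mul_apply_eq_comp, (hP t ht).1, one_apply_eq_self]

theorem add_integral_control_eq_zero {a b : ℝ} (hab : a < b) {M P : ℝ → E →L[ℝ] E}
    (hM : ContinuousOn M (Icc a b))
    (hP : ∀ t ∈ Ioc a b, (∫ s in a..t, M s) * P t = 1 ∧ P t * (∫ s in a..t, M s) = 1)
    {g : ℝ → ℝ} (hg : ContinuousOn g (Ioo a b)) (hg₀ : ∫ t in a..b, g t ≠ 0) {u : E}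
    (hf : IntegrableOn (fun t => g t • P t u) (Ioc a b)) {A : ℝ → E}
    (hA : IntervalIntegrable A volume a b) :
    u + ∫ t in a..b, (A t - M t (P b (∫ s in a..b, A s))
      - (∫ s in a..b, g s)⁻¹ • M t (∫ s in t..b, g s • P s u)) = 0 := by
  have hB : IntervalIntegrable (fun t => M t (P b (∫ s in a..b, A s))) volume a b :=
    (hM.clm_apply continuousOn_const).intervalIntegrable_of_Icc hab.le
  have hC : IntervalIntegrable
      (fun t => (∫ s in a..b, g s)⁻¹ • M t (∫ s in t..b, g s • P s u)) volume a b :=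
    ((hM.clm_apply (continuousOn_integral_left_of_integrableOn_Ioc hab.le hf))
      |>.intervalIntegrable_of_Icc hab.le).smul _
  have hMP : ∫ t in a..b, M t (P b (∫ s in a..b, A s)) = ∫ s in a..b, A s := by
    rw [← ContinuousLinearMap.intervalIntegral_apply (hM.intervalIntegrable_of_Icc hab.le),
      ← mul_apply_eq_comp, (hP b (right_mem_Ioc.2 hab)).1, one_apply_eq_self]
  rw [integral_sub (hA.sub hB) hC, integral_sub hA hB, intervalIntegral.integral_smul,
    integral_apply_integral_smul_apply_eq_smul hab.le hM hP hg hf, hMP, smul_smul,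
    inv_mul_cancel₀ hg₀, one_smul]
  abel

end

theorem stmt3_general (m d : ℕ) (T : ℝ) (hT : 0 < T)
    (v1 : EuclideanSpace ℝ (Fin m)) (v2 : EuclideanSpace ℝ (Fin d))
    (𝒦 : ℝ → EuclideanSpace ℝ (Fin m) →L[ℝ] EuclideanSpace ℝ (Fin m))
    (h𝒦 : ContinuousOn 𝒦 (Set.Icc 0 T))
    (N : ℝ → EuclideanSpace ℝ (Fin d) →L[ℝ] EuclideanSpace ℝ (Fin m))
    (hN : ContinuousOn N (Set.Icc 0 T))
    (B₀ : EuclideanSpace ℝ (Fin d) →L[ℝ] EuclideanSpace ℝ (Fin m))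
    (φ φ' : ℝ → ℝ)
    (hφ : ∀ t ∈ Set.Icc (0:ℝ) T, HasDerivWithinAt φ (φ' t) (Set.Icc 0 T) t)
    (hφ0 : φ 0 = 0) (hφT : φ T = 0)
    (ξ : ℝ → ℝ) (hξc : ContinuousOn ξ (Set.Icc 0 T))
    (hξmono : MonotoneOn ξ (Set.Icc 0 T))
    (hξpos : ∀ t ∈ Set.Ioc (0:ℝ) T, 0 < ξ t)
    (Q : ℝ → EuclideanSpace ℝ (Fin m) →L[ℝ] EuclideanSpace ℝ (Fin m))
    (hQ : ∀ t, Q t = ∫ s in (0:ℝ)..t,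
      φ s • (((𝒦 s).comp (N s)).comp (B₀.adjoint.comp (𝒦 s).adjoint)))
    (Qinv : ℝ → EuclideanSpace ℝ (Fin m) →L[ℝ] EuclideanSpace ℝ (Fin m))
    (hQinv : ∀ t ∈ Set.Ioc (0:ℝ) T,
      (Q t).comp (Qinv t) = ContinuousLinearMap.id ℝ (EuclideanSpace ℝ (Fin m)) ∧
      (Qinv t).comp (Q t) = ContinuousLinearMap.id ℝ (EuclideanSpace ℝ (Fin m)))
    (c : ℝ) (hc : 0 < c)
    (hQbnd : ∀ t ∈ Set.Ioc (0:ℝ) T, ‖Qinv t‖ ≤ c / ξ t)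
    (α : ℝ → EuclideanSpace ℝ (Fin d))
    (hα : ∀ t ∈ Set.Icc (0:ℝ) T, α t =
      ((T - t) / T) • v2
      - φ t • B₀.adjoint ((𝒦 t).adjoint
          (Qinv T (∫ s in (0:ℝ)..T, ((T - s) / T) • (𝒦 s) (N s v2))))
      - (φ t / ∫ s in (0:ℝ)..T, ξ s ^ 2) • B₀.adjoint ((𝒦 t).adjoint
          (∫ s in t..T, ξ s ^ 2 • Qinv s ((𝒦 0) v1)))) :
    α 0 = v2 ∧ α T = 0 ∧
      (𝒦 0) v1 + (∫ t in (0:ℝ)..T, (𝒦 t) (N t (α t))) = 0 := by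
  refine ⟨by simp [hα 0 (left_mem_Icc.2 hT.le), hφ0, hT.ne'],
    by simp [hα T (right_mem_Icc.2 hT.le), hφT], ?_⟩
  set u := 𝒦 0 v1
  set J := ∫ s in (0:ℝ)..T, ξ s ^ 2
  set M := fun s => φ s • (((𝒦 s).comp (N s)).comp (B₀.adjoint.comp (𝒦 s).adjoint))
  set A := fun t => ((T - t) / T) • 𝒦 t (N t v2)
  have hφc : ContinuousOn φ (Icc 0 T) := fun t ht => (hφ t ht).continuousWithinAt
  have hMc : ContinuousOn M (Icc 0 T) := hφc.smul ((h𝒦.clm_comp hN).clm_comp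
    (continuousOn_const.clm_comp (ContinuousLinearMap.adjoint.continuous.comp_continuousOn h𝒦)))
  have hP : ∀ t ∈ Ioc 0 T,
      (∫ s in (0:ℝ)..t, M s) * Qinv t = 1 ∧ Qinv t * (∫ s in (0:ℝ)..t, M s) = 1 :=
    fun t ht => by rw [← hQ]; exact hQinv t ht
  have hf : IntegrableOn (fun s => ξ s ^ 2 • Qinv s u) (Ioc 0 T) :=
    integrableOn_sq_smul_apply_of_norm_le_div hc.le (hξc.mono Ioc_subset_Icc_self)
      (hξmono.mono Ioc_subset_Icc_self) hξpos (continuousOn_of_primitive_mul_eq_one hT.le hMc hP)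
      hQbnd u
  have hJ : 0 < J := intervalIntegral_pos_of_pos_on ((hξc.pow 2).intervalIntegrable_of_Icc hT.le)
    (fun t ht => pow_pos (hξpos t (Ioo_subset_Ioc_self ht)) 2) hT
  have hA : IntervalIntegrable A volume 0 T :=
    (((continuousOn_const.sub continuousOn_id).div_const T).smul
      (h𝒦.clm_apply (hN.clm_apply continuousOn_const))).intervalIntegrable_of_Icc hT.le
  have hαeq : EqOn (fun t => 𝒦 t (N t (α t))) (fun t => A t - M t (Qinv T (∫ s in (0:ℝ)..T, A s))
      - J⁻¹ • M t (∫ s in t..T, ξ s ^ 2 • Qinv s u)) (uIcc 0 T) := by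
    intro t ht
    rw [uIcc_of_le hT.le] at ht
    simp only [hα t ht, map_sub, map_smul, M, A, smul_apply, ContinuousLinearMap.coe_comp,
      Function.comp_apply, smul_smul, div_eq_inv_mul (φ t) J]
  rw [integral_congr hαeq]
  exact add_integral_control_eq_zero hT hMc hP ((hξc.mono Ioo_subset_Icc_self).pow 2) hJ.ne' hf hA

/-- the deterministic verification in the proof of Theorem 1.2(2).
The control `α` defined by formula (1.9) of the paper satisfies `α₀ = v⁽²⁾`, `α_T = 0`
and `𝒦(0)v⁽¹⁾ + ∫₀ᵀ 𝒦(t)N(t)α_t dt = 0`.  Here `𝒦(s)` plays the role of `K(T,s)` and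
`N(s)` the role of `∇⁽²⁾Z⁽¹⁾(X_s)`. -/
theorem stmt3 (m d : ℕ) (T : ℝ) (hT : 0 < T)
    (v1 : EuclideanSpace ℝ (Fin m)) (v2 : EuclideanSpace ℝ (Fin d))
    (𝒦 : ℝ → EuclideanSpace ℝ (Fin m) →L[ℝ] EuclideanSpace ℝ (Fin m))
    (h𝒦 : ContinuousOn 𝒦 (Set.Icc 0 T))
    (N : ℝ → EuclideanSpace ℝ (Fin d) →L[ℝ] EuclideanSpace ℝ (Fin m))
    (hN : ContinuousOn N (Set.Icc 0 T))
    (B₀ : EuclideanSpace ℝ (Fin d) →L[ℝ] EuclideanSpace ℝ (Fin m))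
    (φ φ' : ℝ → ℝ)
    (hφ : ∀ t ∈ Set.Icc (0:ℝ) T, HasDerivWithinAt φ (φ' t) (Set.Icc 0 T) t)
    (hφ'c : ContinuousOn φ' (Set.Icc 0 T))
    (hφ0 : φ 0 = 0) (hφT : φ T = 0)
    (ξ : ℝ → ℝ) (hξc : ContinuousOn ξ (Set.Icc 0 T))
    (hξmono : MonotoneOn ξ (Set.Icc 0 T))
    (hξpos : ∀ t ∈ Set.Ioc (0:ℝ) T, 0 < ξ t)
    (Q : ℝ → EuclideanSpace ℝ (Fin m) →L[ℝ] EuclideanSpace ℝ (Fin m))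
    (hQ : ∀ t, Q t = ∫ s in (0:ℝ)..t,
      φ s • (((𝒦 s).comp (N s)).comp (B₀.adjoint.comp (𝒦 s).adjoint)))
    (Qinv : ℝ → EuclideanSpace ℝ (Fin m) →L[ℝ] EuclideanSpace ℝ (Fin m))
    (hQinv : ∀ t ∈ Set.Ioc (0:ℝ) T,
      (Q t).comp (Qinv t) = ContinuousLinearMap.id ℝ (EuclideanSpace ℝ (Fin m)) ∧
      (Qinv t).comp (Q t) = ContinuousLinearMap.id ℝ (EuclideanSpace ℝ (Fin m)))
    (c : ℝ) (hc : 0 < c)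
    (hQbnd : ∀ t ∈ Set.Ioc (0:ℝ) T, ‖Qinv t‖ ≤ c / ξ t)
    (α : ℝ → EuclideanSpace ℝ (Fin d))
    (hα : ∀ t ∈ Set.Icc (0:ℝ) T, α t =
      ((T - t) / T) • v2
      - φ t • B₀.adjoint ((𝒦 t).adjoint
          (Qinv T (∫ s in (0:ℝ)..T, ((T - s) / T) • (𝒦 s) (N s v2))))
      - (φ t / ∫ s in (0:ℝ)..T, ξ s ^ 2) • B₀.adjoint ((𝒦 t).adjoint
          (∫ s in t..T, ξ s ^ 2 • Qinv s ((𝒦 0) v1)))) :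
    α 0 = v2 ∧ α T = 0 ∧
      (𝒦 0) v1 + (∫ t in (0:ℝ)..T, (𝒦 t) (N t (α t))) = 0 :=
  stmt3_general m d T hT v1 v2 𝒦 h𝒦 N hN B₀ φ φ' hφ hφ0 hφT ξ hξc hξmono hξpos Q hQ Qinv hQinv c hc
    hQbnd α hα
end

section
/- Let T > 0, C ≥ 0, let A : [0,T] → ℝ^{m×m} be continuous with ‖A(s)‖ ≤ C for all s, and let 𝒦 : [0,T] → ℝ^{m×m} be the solution of 𝒦′(s) = −𝒦(s)A(s), 𝒦(T) = I_{m×m} (so that 𝒦(s) = K(T,s), the two-parameter fundamental solution of ∂_t K(t,s) = A(t)K(t,s), K(s,s) = I, evaluated at t = T). Let B₀ ∈ ℝ^{m×d} have rank m, and let φ : [0,T] → [0,∞) be continuous. Then there exist constants c₁, c₂ > 0, depending only on C and B₀, such that for all t ∈ (0,T] and all a ∈ ℝᵐ, ⟨(∫₀ᵗ φ(s) 𝒦(s)B₀B₀* 𝒦(s)* ds) a, a⟩ ≥ (c₁ ∫₀ᵗ φ(s) e^{−c₂(T−s)} ds) |a|². -/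
open scoped RealInnerProductSpace

/-- Evaluation of the adjoint at a fixed vector, as a continuous linear map on operators. -/
noncomputable def adjApplyCLM (m : ℕ) (a : EuclideanSpace ℝ (Fin m)) :
    (EuclideanSpace ℝ (Fin m) →L[ℝ] EuclideanSpace ℝ (Fin m)) →L[ℝ] EuclideanSpace ℝ (Fin m) :=
  LinearMap.mkContinuous
    { toFun := fun M => (ContinuousLinearMap.adjoint M) a
      map_add' := fun M N => by simp
      map_smul' := fun r M => by simp }
    ‖a‖ (fun M => by
      calc ‖(ContinuousLinearMap.adjoint M) a‖ ≤ ‖ContinuousLinearMap.adjoint M‖ * ‖a‖ :=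
            (ContinuousLinearMap.adjoint M).le_opNorm a
        _ = ‖a‖ * ‖M‖ := by rw [LinearIsometryEquiv.norm_map, mul_comm])

/-- Exponential lower bound for `‖𝒦(s)* a‖²` (a Grönwall-type estimate). -/
theorem gronwall_adjoint_lower (m : ℕ) (C : ℝ) (T : ℝ) (hT : 0 < T)
    (A : ℝ → EuclideanSpace ℝ (Fin m) →L[ℝ] EuclideanSpace ℝ (Fin m))
    (hAle : ∀ s ∈ Set.Icc (0:ℝ) T, ‖A s‖ ≤ C)
    (𝒦 : ℝ → EuclideanSpace ℝ (Fin m) →L[ℝ] EuclideanSpace ℝ (Fin m))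
    (h𝒦T : 𝒦 T = ContinuousLinearMap.id ℝ (EuclideanSpace ℝ (Fin m)))
    (h𝒦' : ∀ s ∈ Set.Icc (0:ℝ) T,
      HasDerivWithinAt 𝒦 (-((𝒦 s).comp (A s))) (Set.Icc 0 T) s)
    (a : EuclideanSpace ℝ (Fin m)) :
    ∀ s ∈ Set.Icc (0:ℝ) T,
      Real.exp (-(2*C) * (T - s)) * ‖a‖ ^ 2 ≤ ‖(𝒦 s).adjoint a‖ ^ 2 := by
  set u : ℝ → EuclideanSpace ℝ (Fin m) := fun s => (𝒦 s).adjoint a with hu_def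
  have hu : ∀ s ∈ Set.Icc (0:ℝ) T,
      HasDerivWithinAt u (-((A s).adjoint (u s))) (Set.Icc 0 T) s := by
    intro s hs
    have h1 := (adjApplyCLM m a).hasFDerivAt.comp_hasDerivWithinAt s (h𝒦' s hs)
    have h2 : (adjApplyCLM m a) (-((𝒦 s).comp (A s))) = -((A s).adjoint (u s)) := by
      have : (adjApplyCLM m a) (-((𝒦 s).comp (A s)))
          = (ContinuousLinearMap.adjoint (-((𝒦 s).comp (A s)))) a := rfl
      rw [this, map_neg, ContinuousLinearMap.adjoint_comp]
      rfl
    rw [h2] at h1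
    exact h1
  set g : ℝ → ℝ := fun s => ⟪u s, u s⟫ with hg_def
  have hg : ∀ s ∈ Set.Icc (0:ℝ) T,
      HasDerivWithinAt g
        (⟪u s, -((A s).adjoint (u s))⟫ + ⟪-((A s).adjoint (u s)), u s⟫)
        (Set.Icc 0 T) s := fun s hs => (hu s hs).inner ℝ (hu s hs)
  set h : ℝ → ℝ := fun s => Real.exp (-(2*C) * s) * g s with hh_def
  have hh : ∀ s ∈ Set.Icc (0:ℝ) T,
      HasDerivWithinAt h
        ((-(2*C) * Real.exp (-(2*C) * s)) * g s
          + Real.exp (-(2*C) * s) *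
            (⟪u s, -((A s).adjoint (u s))⟫ + ⟪-((A s).adjoint (u s)), u s⟫))
        (Set.Icc 0 T) s := by
    intro s hs
    have hexp : HasDerivAt (fun s => Real.exp (-(2*C) * s))
        (-(2*C) * Real.exp (-(2*C) * s)) s := by
      simpa [Function.comp_def, mul_comm] using (Real.hasDerivAt_exp (-(2*C) * s)).comp s
        ((hasDerivAt_id s).const_mul (-(2*C)))
    exact hexp.hasDerivWithinAt.mul (hg s hs)
  have hmono : AntitoneOn h (Set.Icc 0 T) := by
    apply antitoneOn_of_deriv_nonpos (convex_Icc 0 T)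
    · exact fun s hs => (hh s hs).continuousWithinAt
    · intro x hx
      rw [interior_Icc] at hx
      exact (((hh x (Set.Ioo_subset_Icc_self hx)).hasDerivAt
        (Icc_mem_nhds hx.1 hx.2)).differentiableAt).differentiableWithinAt
    · intro x hx
      rw [interior_Icc] at hx
      have hd := (hh x (Set.Ioo_subset_Icc_self hx)).hasDerivAt (Icc_mem_nhds hx.1 hx.2)
      rw [hd.deriv]
      have hxI : x ∈ Set.Icc (0:ℝ) T := Set.Ioo_subset_Icc_self hx
      have hnd : ‖(A x).adjoint (u x)‖ ≤ C * ‖u x‖ := by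
        calc ‖(A x).adjoint (u x)‖ ≤ ‖(A x).adjoint‖ * ‖u x‖ :=
              (A x).adjoint.le_opNorm (u x)
          _ ≤ C * ‖u x‖ := by
              apply mul_le_mul_of_nonneg_right _ (norm_nonneg _)
              rw [LinearIsometryEquiv.norm_map]
              exact hAle x hxI
      have hin : ⟪-((A x).adjoint (u x)), u x⟫ ≤ C * (‖u x‖ * ‖u x‖) := by
        calc ⟪-((A x).adjoint (u x)), u x⟫ ≤ ‖-((A x).adjoint (u x))‖ * ‖u x‖ :=
              real_inner_le_norm _ _
          _ = ‖(A x).adjoint (u x)‖ * ‖u x‖ := by rw [norm_neg]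
          _ ≤ C * (‖u x‖ * ‖u x‖) := by
              rw [← mul_assoc]
              exact mul_le_mul_of_nonneg_right hnd (norm_nonneg _)
      have hgx : g x = ‖u x‖ * ‖u x‖ := real_inner_self_eq_norm_mul_norm (u x)
      have hsymm : ⟪u x, -((A x).adjoint (u x))⟫ = ⟪-((A x).adjoint (u x)), u x⟫ :=
        real_inner_comm _ _
      rw [hsymm, hgx]
      have hepos := Real.exp_pos (-(2*C) * x)
      nlinarith [mul_le_mul_of_nonneg_left hin hepos.le]
  intro s hs
  have hTle := hmono hs (Set.right_mem_Icc.mpr hT.le) hs.2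
  have huT : u T = a := by
    rw [hu_def]
    simp [h𝒦T, ContinuousLinearMap.adjoint_id]
  have hhT : h T = Real.exp (-(2*C) * T) * ‖a‖ ^ 2 := by
    simp only [hh_def, hg_def, huT]
    rw [real_inner_self_eq_norm_sq]
  have hgs : g s = ‖u s‖ ^ 2 := real_inner_self_eq_norm_sq (u s)
  have key : Real.exp (-(2*C) * T) * ‖a‖ ^ 2 ≤ Real.exp (-(2*C) * s) * ‖u s‖ ^ 2 := by
    rw [← hhT, ← hgs]; exact hTle
  have hsplit : Real.exp (-(2*C) * (T - s)) = Real.exp ((2*C) * s) * Real.exp (-(2*C) * T) := by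
    rw [← Real.exp_add]; ring_nf
  rw [hsplit, mul_assoc]
  calc Real.exp ((2*C)*s) * (Real.exp (-(2*C) * T) * ‖a‖ ^ 2)
      ≤ Real.exp ((2*C)*s) * (Real.exp (-(2*C) * s) * ‖u s‖ ^ 2) :=
        mul_le_mul_of_nonneg_left key (Real.exp_pos _).le
    _ = ‖u s‖ ^ 2 := by
        rw [← mul_assoc, ← Real.exp_add]
        ring_nf
        simp

set_option maxHeartbeats 1000000

/-- the first assertion of Theorem 4.1, deterministic content.
If `Rank[B₀] = m` (i.e. `B₀ : ℝᵈ → ℝᵐ` is surjective) and `𝒦(s) = K(T,s)` is the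
fundamental solution associated with a coefficient `A` bounded by `C`, then there exist
`c₁, c₂ > 0` depending only on `C` and `B₀` such that
`∫₀ᵗ φ(s) 𝒦(s)B₀B₀*𝒦(s)* ds ≥ (c₁ ∫₀ᵗ φ(s) e^{−c₂(T−s)} ds) I` for `t ∈ (0,T]`. -/
theorem stmt7 (m d : ℕ) (C : ℝ) (hC : 0 ≤ C)
    (B₀ : EuclideanSpace ℝ (Fin d) →L[ℝ] EuclideanSpace ℝ (Fin m))
    (hB₀ : Function.Surjective ⇑B₀) :
    ∃ c₁ > (0:ℝ), ∃ c₂ > (0:ℝ),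
      ∀ T : ℝ, 0 < T →
      ∀ A : ℝ → EuclideanSpace ℝ (Fin m) →L[ℝ] EuclideanSpace ℝ (Fin m),
        ContinuousOn A (Set.Icc 0 T) →
        (∀ s ∈ Set.Icc (0:ℝ) T, ‖A s‖ ≤ C) →
      ∀ 𝒦 : ℝ → EuclideanSpace ℝ (Fin m) →L[ℝ] EuclideanSpace ℝ (Fin m),
        𝒦 T = ContinuousLinearMap.id ℝ (EuclideanSpace ℝ (Fin m)) →
        (∀ s ∈ Set.Icc (0:ℝ) T,
          HasDerivWithinAt 𝒦 (-((𝒦 s).comp (A s))) (Set.Icc 0 T) s) →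
      ∀ φ : ℝ → ℝ, ContinuousOn φ (Set.Icc 0 T) →
        (∀ s ∈ Set.Icc (0:ℝ) T, 0 ≤ φ s) →
      ∀ t ∈ Set.Ioc (0:ℝ) T, ∀ a : EuclideanSpace ℝ (Fin m),
        (c₁ * ∫ s in (0:ℝ)..t, φ s * Real.exp (-c₂ * (T - s))) * ‖a‖ ^ 2 ≤
          ⟪(∫ s in (0:ℝ)..t,
              φ s • (((𝒦 s).comp B₀).comp (B₀.adjoint.comp (𝒦 s).adjoint))) a, a⟫ := by
  -- antilipschitz constant for `B₀.adjoint`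
  have hker : LinearMap.ker
      (B₀.adjoint : EuclideanSpace ℝ (Fin m) →ₗ[ℝ] EuclideanSpace ℝ (Fin d)) = ⊥ := by
    rw [LinearMap.ker_eq_bot']
    intro y hy
    obtain ⟨x, hx⟩ := hB₀ y
    simp only [ContinuousLinearMap.coe_coe] at hy
    have h0 : ⟪y, y⟫ = 0 := by
      calc ⟪y, y⟫ = ⟪B₀.adjoint y, x⟫ := by
            rw [ContinuousLinearMap.adjoint_inner_left, hx]
        _ = 0 := by rw [hy]; simp
    exact inner_self_eq_zero.mp h0
  obtain ⟨K, hK0, hK⟩ := LinearMap.exists_antilipschitzWith _ hker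
  have hKpos : (0:ℝ) < K := hK0
  have hanti : ∀ u : EuclideanSpace ℝ (Fin m),
      ((K:ℝ)^2)⁻¹ * ‖u‖ ^ 2 ≤ ‖B₀.adjoint u‖ ^ 2 := by
    intro u
    have h1 : ‖u‖ ≤ (K:ℝ) * ‖B₀.adjoint u‖ := by
      simpa [dist_eq_norm] using hK.le_mul_dist u 0
    have h2 : ‖u‖^2 ≤ ((K:ℝ) * ‖B₀.adjoint u‖)^2 := by
      apply sq_le_sq' _ h1
      nlinarith [norm_nonneg u, norm_nonneg (B₀.adjoint u)]
    calc ((K:ℝ)^2)⁻¹ * ‖u‖^2 ≤ ((K:ℝ)^2)⁻¹ * ((K:ℝ) * ‖B₀.adjoint u‖)^2 :=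
          mul_le_mul_of_nonneg_left h2 (by positivity)
      _ = ‖B₀.adjoint u‖^2 := by field_simp
  refine ⟨((K:ℝ)^2)⁻¹, by positivity, 2*C + 1, by linarith, ?_⟩
  intro T hT A hAc hAle 𝒦 h𝒦T h𝒦' φ hφc hφ0 t ht a
  set c₁ : ℝ := ((K:ℝ)^2)⁻¹ with hc₁_def
  set c₂ : ℝ := 2*C + 1 with hc₂_def
  have hc₁pos : 0 < c₁ := by positivity
  have hts : Set.Icc (0:ℝ) t ⊆ Set.Icc 0 T := Set.Icc_subset_Icc le_rfl ht.2
  have huIcc : Set.uIcc (0:ℝ) t = Set.Icc 0 t := Set.uIcc_of_le ht.1.le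
  -- continuity of 𝒦 and of the integrand
  have h𝒦c : ContinuousOn 𝒦 (Set.Icc 0 T) := fun s hs => (h𝒦' s hs).continuousWithinAt
  have h𝒦t : ContinuousOn 𝒦 (Set.Icc 0 t) := h𝒦c.mono hts
  have hadjc : ContinuousOn (fun s => (𝒦 s).adjoint) (Set.Icc 0 t) :=
    (ContinuousLinearMap.adjoint :
      (EuclideanSpace ℝ (Fin m) →L[ℝ] EuclideanSpace ℝ (Fin m)) ≃ₗᵢ⋆[ℝ]
      (EuclideanSpace ℝ (Fin m) →L[ℝ] EuclideanSpace ℝ (Fin m))).continuous.comp_continuousOn h𝒦t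
  set F : ℝ → EuclideanSpace ℝ (Fin m) →L[ℝ] EuclideanSpace ℝ (Fin m) :=
    fun s => φ s • (((𝒦 s).comp B₀).comp (B₀.adjoint.comp (𝒦 s).adjoint)) with hF_def
  have hFc : ContinuousOn F (Set.Icc 0 t) := by
    apply (hφc.mono hts).smul
    exact (h𝒦t.clm_comp continuousOn_const).clm_comp (continuousOn_const.clm_comp hadjc)
  have hintF : IntervalIntegrable F MeasureTheory.volume 0 t := by
    apply ContinuousOn.intervalIntegrable
    rwa [huIcc]
  have hintFa : IntervalIntegrable (fun s => F s a) MeasureTheory.volume 0 t := by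
    apply ContinuousOn.intervalIntegrable
    rw [huIcc]
    exact hFc.clm_apply continuousOn_const
  set f₁ : ℝ → ℝ := fun s => c₁ * (φ s * Real.exp (-c₂ * (T - s))) * ‖a‖ ^ 2 with hf₁_def
  set f₂ : ℝ → ℝ := fun s => ⟪F s a, a⟫ with hf₂_def
  have hint₁ : IntervalIntegrable f₁ MeasureTheory.volume 0 t := by
    apply ContinuousOn.intervalIntegrable
    rw [huIcc]
    apply ContinuousOn.mul _ continuousOn_const
    apply continuousOn_const.mul
    apply (hφc.mono hts).mul
    exact (Real.continuous_exp.comp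
      (continuous_const.mul (continuous_const.sub continuous_id))).continuousOn
  have hint₂ : IntervalIntegrable f₂ MeasureTheory.volume 0 t := by
    apply ContinuousOn.intervalIntegrable
    rw [huIcc]
    exact ContinuousOn.inner (hFc.clm_apply continuousOn_const) continuousOn_const
  -- the Grönwall lower bound
  have glb := gronwall_adjoint_lower m C T hT A hAle 𝒦 h𝒦T h𝒦' a
  -- pointwise comparison
  have hpt : ∀ s ∈ Set.Icc (0:ℝ) t, f₁ s ≤ f₂ s := by
    intro s hs
    have hsT : s ∈ Set.Icc (0:ℝ) T := hts hs
    set u := (𝒦 s).adjoint a with hu_def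
    have hf₂eq : f₂ s = φ s * ‖B₀.adjoint u‖ ^ 2 := by
      simp only [hf₂_def, hF_def, ContinuousLinearMap.smul_apply,
        ContinuousLinearMap.comp_apply, real_inner_smul_left]
      congr 1
      rw [real_inner_comm, ← ContinuousLinearMap.adjoint_inner_left,
        ← ContinuousLinearMap.adjoint_inner_left, real_inner_self_eq_norm_sq]
    rw [hf₂eq]
    have e1 : Real.exp (-c₂ * (T - s)) ≤ Real.exp (-(2*C) * (T - s)) := by
      apply Real.exp_le_exp.mpr
      have hTs : 0 ≤ T - s := by
        have := hs.2
        have := ht.2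
        linarith [hsT.2]
      rw [hc₂_def]
      have h4 : (2*C) * (T - s) ≤ (2*C+1) * (T - s) :=
        mul_le_mul_of_nonneg_right (by linarith) hTs
      linarith
    have e2 : c₁ * (Real.exp (-(2*C) * (T - s)) * ‖a‖ ^ 2) ≤ c₁ * ‖u‖ ^ 2 :=
      mul_le_mul_of_nonneg_left (glb s hsT) hc₁pos.le
    have e3 : c₁ * ‖u‖ ^ 2 ≤ ‖B₀.adjoint u‖ ^ 2 := hanti u
    have chain : c₁ * Real.exp (-c₂ * (T - s)) * ‖a‖ ^ 2 ≤ ‖B₀.adjoint u‖ ^ 2 := by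
      calc c₁ * Real.exp (-c₂ * (T - s)) * ‖a‖ ^ 2
          ≤ c₁ * Real.exp (-(2*C) * (T - s)) * ‖a‖ ^ 2 := by
            apply mul_le_mul_of_nonneg_right _ (sq_nonneg _)
            exact mul_le_mul_of_nonneg_left e1 hc₁pos.le
        _ = c₁ * (Real.exp (-(2*C) * (T - s)) * ‖a‖ ^ 2) := by ring
        _ ≤ c₁ * ‖u‖ ^ 2 := e2
        _ ≤ ‖B₀.adjoint u‖ ^ 2 := e3
    have hφs : 0 ≤ φ s := hφ0 s hsT
    calc f₁ s = φ s * (c₁ * Real.exp (-c₂ * (T - s)) * ‖a‖ ^ 2) := by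
          simp only [hf₁_def]; ring
      _ ≤ φ s * ‖B₀.adjoint u‖ ^ 2 := mul_le_mul_of_nonneg_left chain hφs
  -- put everything together
  have hLHS : (c₁ * ∫ s in (0:ℝ)..t, φ s * Real.exp (-c₂ * (T - s))) * ‖a‖ ^ 2
      = ∫ s in (0:ℝ)..t, f₁ s := by
    simp only [hf₁_def]
    rw [intervalIntegral.integral_mul_const, intervalIntegral.integral_const_mul]
  have hRHS : ⟪(∫ s in (0:ℝ)..t, F s) a, a⟫ = ∫ s in (0:ℝ)..t, f₂ s := by
    calc ⟪(∫ s in (0:ℝ)..t, F s) a, a⟫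
        = (innerSL ℝ a) (∫ s in (0:ℝ)..t, F s a) := by
          rw [ContinuousLinearMap.intervalIntegral_apply hintF]
          exact real_inner_comm _ _
      _ = ∫ s in (0:ℝ)..t, (innerSL ℝ a) (F s a) :=
          ((innerSL ℝ a).intervalIntegral_comp_comm hintFa).symm
      _ = ∫ s in (0:ℝ)..t, f₂ s := by
          apply intervalIntegral.integral_congr
          intro s _
          simp only [innerSL_apply_apply, hf₂_def]
          exact real_inner_comm _ _
  rw [hLHS]
  calc (∫ s in (0:ℝ)..t, f₁ s) ≤ ∫ s in (0:ℝ)..t, f₂ s :=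
        intervalIntegral.integral_mono_on ht.1.le hint₁ hint₂ hpt
    _ = ⟪(∫ s in (0:ℝ)..t, F s) a, a⟫ := hRHS.symm
end

section
/- Let A ∈ ℝ^{m×m}, B₀ ∈ ℝ^{m×d}, and let 0 ≤ k ≤ m−1 be such that the m×(d(k+1)) block matrix [B₀, AB₀, …, AᵏB₀] has rank m (Kalman condition). Then there exist constants c₁, c₂ > 0, depending only on A, B₀ and k, such that for every T > 0 and every t ∈ (0,T], with φ(s) := s(T−s)/T², one has ⟨(∫₀ᵗ φ(s) e^{(T−s)A} B₀B₀* e^{(T−s)A*} ds) a, a⟩ ≥ (c₁ (min(t,1))^{2(k+1)} / (T e^{c₂ T})) |a|² for all a ∈ ℝᵐ. -/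
/-!
The quadratic form equals `∫₀ᵗ φ(s) ‖B₀* e^{(T-s)A*} a‖² ds`. On `[τ/2, τ]`, with `τ` a fixed
small multiple of `min t 1`, the weight `φ` is at least `τ/(4T)`; shifting time by `T - τ`
(which costs a factor `e^{2T‖A‖}`) leaves the small-time observability estimate
`∫₀^r ‖C e^{uL} b‖² du ≥ c r^{2k+1} ‖b‖²` for `L = A*`, `C = B₀*` and `r ≤ r₀`.
To prove it, compare `C e^{uL} b` with its Taylor polynomial `∑_{j ≤ k} uʲ/j! • C Lʲ b`.
By equivalence of norms on the finite-dimensional space of polynomials of degree `≤ k`, the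
integral of the squared polynomial over `[0, r]` is `≳ r^{2k+1} max_j ‖C Lʲ b / j!‖²`, which the
Kalman condition bounds below by a multiple of `‖b‖²`; the Taylor remainder is
`O(u^{k+1} ‖b‖)` and only contributes `O(r^{2k+3} ‖b‖²)`.
-/

open Finset
open scoped Nat RealInnerProductSpace

lemma exists_pos_mul_norm_sq_le {V : Type*} [NormedAddCommGroup V] [NormedSpace ℝ V]
    [FiniteDimensional ℝ V] {q : V → ℝ} (hq : Continuous q) (hpos : ∀ x ≠ 0, 0 < q x)
    (hhom : ∀ (c : ℝ) (x : V), 0 ≤ c → q (c • x) = c ^ 2 * q x) :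
    ∃ δ > (0 : ℝ), ∀ x, δ * ‖x‖ ^ 2 ≤ q x := by
  rcases subsingleton_or_nontrivial V with hV | hV
  · refine ⟨1, one_pos, fun x => ?_⟩
    simpa [Subsingleton.elim x 0] using (hhom 0 0 le_rfl).ge
  obtain ⟨x₀, hx₀, hmin⟩ := (isCompact_sphere (0 : V) 1).exists_isMinOn
    (NormedSpace.sphere_nonempty.2 zero_le_one) hq.continuousOn
  have hx₀ : ‖x₀‖ = 1 := by simpa using hx₀
  refine ⟨q x₀, hpos x₀ (norm_ne_zero_iff.1 (by simp [hx₀])), fun x => ?_⟩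
  rcases eq_or_ne x 0 with rfl | hx
  · simpa using (hhom 0 0 le_rfl).ge
  have hx' : ‖x‖ ≠ 0 := norm_ne_zero_iff.2 hx
  have hu : ‖x‖⁻¹ • x ∈ Metric.sphere (0 : V) 1 := by simp [norm_smul, hx']
  calc q x₀ * ‖x‖ ^ 2 ≤ q (‖x‖⁻¹ • x) * ‖x‖ ^ 2 := by gcongr; exact hmin hu
    _ = q x := by rw [hhom _ _ (by positivity), mul_comm, ← mul_assoc, ← mul_pow,
        mul_inv_cancel₀ hx', one_pow, one_mul]

section BanachAlgebra
variable {𝔸 : Type*} [NormedRing 𝔸] [NormedAlgebra ℝ 𝔸] [CompleteSpace 𝔸]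

lemma continuous_exp_smul (a : 𝔸) : Continuous fun u : ℝ => NormedSpace.exp (u • a) :=
  continuous_iff_continuousAt.2 fun u => (hasDerivAt_exp_smul_const a u).continuousAt

lemma exp_add_smul (a : 𝔸) (s u : ℝ) :
    NormedSpace.exp ((s + u) • a) = NormedSpace.exp (s • a) * NormedSpace.exp (u • a) := by
  rw [add_smul]
  exact NormedSpace.exp_add_of_commute_of_mem_ball (𝕂 := ℝ)
    (((Commute.refl a).smul_left s).smul_right u)
    (by simp [NormedSpace.expSeries_radius_eq_top]) (by simp [NormedSpace.expSeries_radius_eq_top])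

end BanachAlgebra

lemma ContinuousLinearMap.norm_pow_apply_le {E : Type*} [NormedAddCommGroup E]
    [NormedSpace ℝ E] (L : E →L[ℝ] E) (x : E) (n : ℕ) : ‖(L ^ n) x‖ ≤ ‖L‖ ^ n * ‖x‖ := by
  induction n with
  | zero => simp
  | succ n ih =>
    rw [pow_succ', mul_apply_eq_comp, pow_succ', mul_assoc]
    exact (L.le_opNorm _).trans (by gcongr)

lemma norm_exp_apply_sub_sum_le {E : Type*} [NormedAddCommGroup E] [NormedSpace ℝ E]
    [CompleteSpace E] (L : E →L[ℝ] E) (x : E) (n : ℕ) :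
    ‖NormedSpace.exp L x - ∑ j ∈ range n, (j ! : ℝ)⁻¹ • (L ^ j) x‖
      ≤ ‖L‖ ^ n * ‖x‖ * Real.exp ‖L‖ := by
  have hexp : HasSum (fun j => (j ! : ℝ)⁻¹ • (L ^ j) x) (NormedSpace.exp L x) :=
    (NormedSpace.exp_series_hasSum_exp' (𝕂 := ℝ) L).mapL (ContinuousLinearMap.apply ℝ E x)
  have hmajorant : HasSum (fun i => ‖L‖ ^ n * ‖x‖ * (‖L‖ ^ i / i !))
      (‖L‖ ^ n * ‖x‖ * Real.exp ‖L‖) := by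
    rw [Real.exp_eq_exp_ℝ]
    exact (NormedSpace.expSeries_div_hasSum_exp ‖L‖).mul_left _
  refine ((hasSum_nat_add_iff' n).2 hexp).norm_le_of_bounded hmajorant fun i => ?_
  rw [norm_smul, norm_inv, Real.norm_natCast]
  calc ((i + n) ! : ℝ)⁻¹ * ‖(L ^ (i + n)) x‖ ≤ (i ! : ℝ)⁻¹ * (‖L‖ ^ (i + n) * ‖x‖) := by
        gcongr
        · exact Nat.le_add_right i n
        · exact L.norm_pow_apply_le x _
    _ = ‖L‖ ^ n * ‖x‖ * (‖L‖ ^ i / i !) := by ring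

section Polynomial
variable {F : Type*} [NormedAddCommGroup F] [InnerProductSpace ℝ F]

lemma eq_zero_of_sum_pow_smul_eq_zero {n : ℕ} {p : Fin n → F} {s : Set ℝ} (hs : s.Infinite)
    (h : ∀ u ∈ s, ∑ j : Fin n, u ^ (j : ℕ) • p j = 0) : p = 0 := by
  funext j₀
  -- Pairing with `p j₀` gives a real polynomial with infinitely many roots whose
  -- `j₀`-th coefficient is `‖p j₀‖²`.
  let P : Polynomial ℝ := ∑ j, Polynomial.C ⟪p j, p j₀⟫ * Polynomial.X ^ (j : ℕ)
  have hP : P = 0 := by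
    refine Polynomial.eq_zero_of_infinite_isRoot P (hs.mono fun u hu => ?_)
    have := congrArg (⟪·, p j₀⟫) (h u hu)
    simp only [sum_inner, real_inner_smul_left, inner_zero_left] at this
    simp only [P, Polynomial.IsRoot, Polynomial.eval_finsetSum, Polynomial.eval_mul,
      Polynomial.eval_C, Polynomial.eval_pow, Polynomial.eval_X]
    rw [← this]
    exact Finset.sum_congr rfl fun j _ => mul_comm _ _
  have hcoeff := congrArg (Polynomial.coeff · (j₀ : ℕ)) hP
  simp only [P, Polynomial.finsetSum_coeff, Polynomial.coeff_C_mul_X_pow, Fin.val_inj,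
    Polynomial.coeff_zero] at hcoeff
  rw [Finset.sum_ite_eq, if_pos (mem_univ _)] at hcoeff
  exact inner_self_eq_zero.1 hcoeff

variable [FiniteDimensional ℝ F]

lemma exists_pos_mul_norm_sq_le_integral_norm_sq_sum_pow_smul (n : ℕ) :
    ∃ c > (0 : ℝ), ∀ p : Fin n → F,
      c * ‖p‖ ^ 2 ≤ ∫ u in (0 : ℝ)..1, ‖∑ j : Fin n, u ^ (j : ℕ) • p j‖ ^ 2 := by
  refine exists_pos_mul_norm_sq_le ?_ (fun p hp => ?_) (fun c p _ => ?_)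
  · exact intervalIntegral.continuous_parametric_intervalIntegral_of_continuous'
      (by fun_prop) 0 1
  · refine intervalIntegral.integral_pos zero_lt_one (by fun_prop)
      (fun _ _ => by positivity) ?_
    by_contra! h
    exact hp (eq_zero_of_sum_pow_smul_eq_zero (Set.Icc_infinite zero_lt_one) fun u hu => by
      simpa using le_antisymm (h u hu) (by positivity))
  · simp only [Pi.smul_apply, smul_comm _ c, ← Finset.smul_sum, norm_smul, mul_pow,
      Real.norm_eq_abs, sq_abs]
    exact intervalIntegral.integral_const_mul _ _

lemma exists_pos_mul_pow_mul_norm_sq_le_integral_norm_sq_sum_pow_smul (k : ℕ) :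
    ∃ c > (0 : ℝ), ∀ r, 0 < r → r ≤ 1 → ∀ p : Fin (k + 1) → F,
      c * r ^ (2 * k + 1) * ‖p‖ ^ 2 ≤
        ∫ u in (0 : ℝ)..r, ‖∑ j : Fin (k + 1), u ^ (j : ℕ) • p j‖ ^ 2 := by
  obtain ⟨c, hc, hpoly⟩ := exists_pos_mul_norm_sq_le_integral_norm_sq_sum_pow_smul (F := F) (k + 1)
  refine ⟨c, hc, fun r hr0 hr1 p => ?_⟩
  set q : Fin (k + 1) → F := fun j => r ^ (j : ℕ) • p j
  have hq : r ^ k * ‖p‖ ≤ ‖q‖ := by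
    rw [← abs_of_pos (pow_pos hr0 k), ← Real.norm_eq_abs, ← norm_smul]
    refine pi_norm_le_iff_of_nonneg (norm_nonneg _) |>.2 fun j => ?_
    calc ‖(r ^ k • p) j‖ = r ^ k * ‖p j‖ := by simp [norm_smul, abs_of_pos hr0]
      _ ≤ r ^ (j : ℕ) * ‖p j‖ := mul_le_mul_of_nonneg_right
          (pow_le_pow_of_le_one hr0.le hr1 (Nat.lt_succ_iff.1 j.isLt)) (norm_nonneg _)
      _ = ‖q j‖ := by simp [q, norm_smul, abs_of_pos hr0]
      _ ≤ ‖q‖ := norm_le_pi_norm q j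
  calc c * r ^ (2 * k + 1) * ‖p‖ ^ 2 = r * (c * (r ^ k * ‖p‖) ^ 2) := by ring
    _ ≤ r * (c * ‖q‖ ^ 2) := by gcongr
    _ ≤ r * ∫ v in (0 : ℝ)..1, ‖∑ j : Fin (k + 1), v ^ (j : ℕ) • q j‖ ^ 2 := by
        gcongr
        exact hpoly q
    _ = ∫ u in (0 : ℝ)..r, ‖∑ j : Fin (k + 1), u ^ (j : ℕ) • p j‖ ^ 2 := by
        simp only [q, smul_smul, ← mul_pow]
        rw [intervalIntegral.integral_comp_mul_right
          (fun u => ‖∑ j : Fin (k + 1), u ^ (j : ℕ) • p j‖ ^ 2) hr0.ne', smul_eq_mul,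
          ← mul_assoc, mul_inv_cancel₀ hr0.ne', one_mul, zero_mul, one_mul]

end Polynomial

lemma integral_norm_sq_div_two_sub_integral_norm_sq_sub_le {F : Type*} [NormedAddCommGroup F]
    {f g : ℝ → F} (hf : Continuous f) (hg : Continuous g) {a b : ℝ} (hab : a ≤ b) :
    (∫ u in a..b, ‖g u‖ ^ 2) / 2 - ∫ u in a..b, ‖f u - g u‖ ^ 2 ≤ ∫ u in a..b, ‖f u‖ ^ 2 := by
  rw [← intervalIntegral.integral_div, ← intervalIntegral.integral_sub
    ((by fun_prop : Continuous fun u => ‖g u‖ ^ 2 / 2).intervalIntegrable _ _)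
    ((by fun_prop : Continuous fun u => ‖f u - g u‖ ^ 2).intervalIntegrable _ _)]
  refine intervalIntegral.integral_mono_on hab (Continuous.intervalIntegrable (by fun_prop) _ _)
    (Continuous.intervalIntegrable (by fun_prop) _ _) fun u _ => ?_
  have htri : ‖g u‖ ≤ ‖f u‖ + ‖f u - g u‖ := by
    simpa using norm_sub_le (f u) (f u - g u)
  nlinarith [norm_nonneg (g u), sq_nonneg (‖f u‖ - ‖f u - g u‖)]

lemma eq_zero_of_forall_adjoint_apply_adjoint_pow_eq_zero {E U : Type*}
    [NormedAddCommGroup E] [InnerProductSpace ℝ E] [CompleteSpace E]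
    [NormedAddCommGroup U] [InnerProductSpace ℝ U] [CompleteSpace U]
    {A : E →L[ℝ] E} {B : U →L[ℝ] E} {k : ℕ}
    (hK : ⨆ j ∈ range (k + 1), LinearMap.range ((A ^ j).comp B : U →ₗ[ℝ] E) = ⊤)
    {x : E} (hx : ∀ j ≤ k, B.adjoint ((A.adjoint ^ j) x) = 0) : x = 0 := by
  have hle : (⨆ j ∈ range (k + 1), LinearMap.range ((A ^ j).comp B : U →ₗ[ℝ] E)) ≤
      LinearMap.ker (innerₛₗ ℝ x) := by
    refine iSup₂_le fun j hj => ?_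
    rintro _ ⟨z, rfl⟩
    rw [LinearMap.mem_ker, innerₛₗ_apply_apply, ContinuousLinearMap.coe_coe,
      ← ContinuousLinearMap.adjoint_inner_left, ContinuousLinearMap.adjoint_comp,
      ← ContinuousLinearMap.star_eq_adjoint (A ^ j), star_pow,
      ContinuousLinearMap.star_eq_adjoint, ContinuousLinearMap.comp_apply,
      hx j (Nat.lt_succ_iff.1 (mem_range.1 hj)), inner_zero_left]
  exact inner_self_eq_zero.1 (hle (hK ▸ Submodule.mem_top))

section Observability
variable {E F : Type*} [NormedAddCommGroup E] [NormedSpace ℝ E] [NormedAddCommGroup F]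
  [NormedSpace ℝ F]

noncomputable def taylorCoeffs (C : E →L[ℝ] F) (L : E →L[ℝ] E) (k : ℕ) (x : E) :
    Fin (k + 1) → F :=
  fun j => ((j : ℕ) ! : ℝ)⁻¹ • C ((L ^ (j : ℕ)) x)

lemma exists_pos_mul_norm_sq_le_norm_taylorCoeffs_sq [FiniteDimensional ℝ E]
    {C : E →L[ℝ] F} {L : E →L[ℝ] E} {k : ℕ}
    (hinj : ∀ x, (∀ j ≤ k, C ((L ^ j) x) = 0) → x = 0) :
    ∃ δ > (0 : ℝ), ∀ x, δ * ‖x‖ ^ 2 ≤ ‖taylorCoeffs C L k x‖ ^ 2 := by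
  refine exists_pos_mul_norm_sq_le (by unfold taylorCoeffs; fun_prop) (fun x hx => ?_)
    (fun c x _ => ?_)
  · refine pow_pos (norm_pos_iff.2 fun h => hx (hinj x fun j hj => ?_)) 2
    simpa [taylorCoeffs, Nat.factorial_ne_zero] using congrFun h ⟨j, Nat.lt_succ_iff.2 hj⟩
  · have : taylorCoeffs C L k (c • x) = c • taylorCoeffs C L k x := by
      funext j
      simp [taylorCoeffs, smul_comm c]
    rw [this, norm_smul, mul_pow, Real.norm_eq_abs, sq_abs]

lemma norm_apply_exp_smul_sub_sum_taylorCoeffs_le [CompleteSpace E] (C : E →L[ℝ] F)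
    (L : E →L[ℝ] E) (k : ℕ) (x : E) {u : ℝ} (hu0 : 0 ≤ u) (hu1 : u ≤ 1) :
    ‖C (NormedSpace.exp (u • L) x) - ∑ j : Fin (k + 1), u ^ (j : ℕ) • taylorCoeffs C L k x j‖
      ≤ ‖C‖ * ‖L‖ ^ (k + 1) * Real.exp ‖L‖ * u ^ (k + 1) * ‖x‖ := by
  have hsum : ∑ j : Fin (k + 1), u ^ (j : ℕ) • taylorCoeffs C L k x j
      = C (∑ j ∈ range (k + 1), (j ! : ℝ)⁻¹ • ((u • L) ^ j) x) := by
    simp only [taylorCoeffs, map_sum, map_smul, smul_pow, smul_apply, smul_comm (u ^ _)]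
    exact Fin.sum_univ_eq_sum_range (fun j => (j ! : ℝ)⁻¹ • u ^ j • C ((L ^ j) x)) (k + 1)
  rw [hsum, ← map_sub]
  calc _ ≤ ‖C‖ * (‖u • L‖ ^ (k + 1) * ‖x‖ * Real.exp ‖u • L‖) :=
        (C.le_opNorm _).trans (by gcongr; exact norm_exp_apply_sub_sum_le _ _ _)
    _ ≤ ‖C‖ * ((u * ‖L‖) ^ (k + 1) * ‖x‖ * Real.exp ‖L‖) := by
        rw [norm_smul, Real.norm_of_nonneg hu0]
        gcongr
        exact mul_le_of_le_one_left (norm_nonneg _) hu1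
    _ = ‖C‖ * ‖L‖ ^ (k + 1) * Real.exp ‖L‖ * u ^ (k + 1) * ‖x‖ := by ring

lemma integral_norm_sq_apply_exp_smul_sub_sum_taylorCoeffs_le [CompleteSpace E]
    (C : E →L[ℝ] F) (L : E →L[ℝ] E) (k : ℕ) (x : E) {r : ℝ} (hr0 : 0 ≤ r) (hr1 : r ≤ 1) :
    ∫ u in (0 : ℝ)..r, ‖C (NormedSpace.exp (u • L) x) -
        ∑ j : Fin (k + 1), u ^ (j : ℕ) • taylorCoeffs C L k x j‖ ^ 2
      ≤ r * (‖C‖ * ‖L‖ ^ (k + 1) * Real.exp ‖L‖ * r ^ (k + 1) * ‖x‖) ^ 2 := by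
  have hf : Continuous fun u : ℝ => C (NormedSpace.exp (u • L) x) :=
    C.continuous.comp ((continuous_exp_smul L).clm_apply continuous_const)
  rw [← sub_zero r, ← smul_eq_mul, ← intervalIntegral.integral_const, sub_zero]
  refine intervalIntegral.integral_mono_on hr0
    (((hf.sub (by fun_prop)).norm.pow 2).intervalIntegrable _ _) intervalIntegrable_const
    fun u hu => ?_
  gcongr
  refine (norm_apply_exp_smul_sub_sum_taylorCoeffs_le C L k x hu.1 (hu.2.trans hr1)).trans ?_
  gcongr
  exacts [hu.1, hu.2]

end Observability

theorem exists_pos_mul_pow_mul_norm_sq_le_integral_norm_sq_apply_exp_smul {E F : Type*}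
    [NormedAddCommGroup E] [NormedSpace ℝ E] [FiniteDimensional ℝ E]
    [NormedAddCommGroup F] [InnerProductSpace ℝ F] [FiniteDimensional ℝ F] {C : E →L[ℝ] F} {L : E →L[ℝ] E} {k : ℕ}
    (hinj : ∀ x, (∀ j ≤ k, C ((L ^ j) x) = 0) → x = 0) :
    ∃ c > (0 : ℝ), ∃ r₀ > (0 : ℝ), ∀ r, 0 < r → r ≤ r₀ → ∀ x,
      c * r ^ (2 * k + 1) * ‖x‖ ^ 2 ≤ ∫ u in (0 : ℝ)..r, ‖C (NormedSpace.exp (u • L) x)‖ ^ 2 := by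
  obtain ⟨c₀, hc₀, hpoly⟩ :=
    exists_pos_mul_pow_mul_norm_sq_le_integral_norm_sq_sum_pow_smul (F := F) k
  obtain ⟨δ, hδ, hcoeffs⟩ := exists_pos_mul_norm_sq_le_norm_taylorCoeffs_sq hinj
  set M := ‖C‖ * ‖L‖ ^ (k + 1) * Real.exp ‖L‖
  refine ⟨c₀ * δ / 4, by positivity, min 1 (c₀ * δ / (4 * (M ^ 2 + 1))), by positivity,
    fun r hr hr₀ x => ?_⟩
  have hr1 : r ≤ 1 := hr₀.trans (min_le_left _ _)
  have hMr : M ^ 2 * r ^ 2 ≤ c₀ * δ / 4 := by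
    have h1 : r ≤ c₀ * δ / (4 * (M ^ 2 + 1)) := hr₀.trans (min_le_right _ _)
    rw [le_div_iff₀ (by positivity)] at h1
    nlinarith [sq_nonneg M, mul_le_of_le_one_left hr.le hr1]
  have hrem := integral_norm_sq_apply_exp_smul_sub_sum_taylorCoeffs_le C L k x hr.le hr1
  set f : ℝ → F := fun u => C (NormedSpace.exp (u • L) x)
  set P : ℝ → F := fun u => ∑ j : Fin (k + 1), u ^ (j : ℕ) • taylorCoeffs C L k x j
  have hf : Continuous f := C.continuous.comp ((continuous_exp_smul L).clm_apply continuous_const)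
  have hP : c₀ * r ^ (2 * k + 1) * (δ * ‖x‖ ^ 2) ≤ ∫ u in (0 : ℝ)..r, ‖P u‖ ^ 2 := by
    refine le_trans ?_ (hpoly r hr hr1 _)
    gcongr
    exact hcoeffs x
  calc c₀ * δ / 4 * r ^ (2 * k + 1) * ‖x‖ ^ 2
      ≤ c₀ * r ^ (2 * k + 1) * (δ * ‖x‖ ^ 2) / 2 - r * (M * r ^ (k + 1) * ‖x‖) ^ 2 := by
        have : r * (M * r ^ (k + 1) * ‖x‖) ^ 2 =
            M ^ 2 * r ^ 2 * (r ^ (2 * k + 1) * ‖x‖ ^ 2) := by ring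
        rw [this]
        nlinarith [mul_le_mul_of_nonneg_right hMr (by positivity : 0 ≤ r ^ (2 * k + 1) * ‖x‖ ^ 2)]
    _ ≤ (∫ u in (0 : ℝ)..r, ‖P u‖ ^ 2) / 2 - ∫ u in (0 : ℝ)..r, ‖f u - P u‖ ^ 2 := by gcongr
    _ ≤ ∫ u in (0 : ℝ)..r, ‖f u‖ ^ 2 :=
        integral_norm_sq_div_two_sub_integral_norm_sq_sub_le hf (by fun_prop) hr.le

lemma mul_norm_sq_le_exp_mul_integral_norm_sq_apply_exp_add_smul {E F : Type*}
    [NormedAddCommGroup E] [NormedSpace ℝ E] [CompleteSpace E] [NormedAddCommGroup F]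
    [NormedSpace ℝ F] {C : E →L[ℝ] F} {L : E →L[ℝ] E} {K r : ℝ} (hK : 0 ≤ K)
    (hobs : ∀ x, K * ‖x‖ ^ 2 ≤ ∫ u in (0 : ℝ)..r, ‖C (NormedSpace.exp (u • L) x)‖ ^ 2)
    (s : ℝ) (x : E) :
    K * ‖x‖ ^ 2 ≤ Real.exp (2 * |s| * ‖L‖) *
      ∫ u in (0 : ℝ)..r, ‖C (NormedSpace.exp ((u + s) • L) x)‖ ^ 2 := by
  set y := NormedSpace.exp (s • L) x
  have hx : ‖x‖ ≤ Real.exp (|s| * ‖L‖) * ‖y‖ := by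
    have hxy : x = NormedSpace.exp ((-s) • L) y := by
      rw [← mul_apply_eq_comp, ← exp_add_smul L (-s) s, neg_add_cancel, zero_smul,
        NormedSpace.exp_zero, one_apply_eq_self]
    -- the case `n = 0` of the Taylor bound: `‖exp M y‖ ≤ ‖y‖ * exp ‖M‖`
    have := norm_exp_apply_sub_sum_le ((-s) • L) y 0
    rw [range_zero, sum_empty, sub_zero, pow_zero, one_mul, norm_smul, Real.norm_eq_abs,
      abs_neg] at this
    rw [hxy, mul_comm]
    exact this
  have hshift : ∀ u, NormedSpace.exp ((u + s) • L) x = NormedSpace.exp (u • L) y := fun u => by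
    rw [exp_add_smul L u s, mul_apply_eq_comp]
  calc K * ‖x‖ ^ 2 ≤ K * (Real.exp (|s| * ‖L‖) * ‖y‖) ^ 2 := by gcongr
    _ = Real.exp (2 * |s| * ‖L‖) * (K * ‖y‖ ^ 2) := by
        rw [mul_pow, ← Real.exp_nat_mul]
        ring_nf
    _ ≤ _ := by
        simp only [hshift]
        gcongr
        exact hobs y

lemma mul_integral_comp_add_le_integral_mul_comp_sub {h : ℝ → ℝ} (hh : Continuous h)
    (hnn : ∀ u, 0 ≤ h u) {T t τ : ℝ} (hτ : 0 < τ) (hτt : 2 * τ ≤ t) (htT : t ≤ T) :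
    τ / (4 * T) * ∫ u in (0 : ℝ)..τ / 2, h (u + (T - τ)) ≤
      ∫ s in (0 : ℝ)..t, s * (T - s) / T ^ 2 * h (T - s) := by
  have hT : 0 < T := by linarith
  have hweight : Continuous fun s => s * (T - s) / T ^ 2 * h (T - s) := by fun_prop
  calc τ / (4 * T) * ∫ u in (0 : ℝ)..τ / 2, h (u + (T - τ))
      = ∫ s in τ / 2..τ, τ / (4 * T) * h (T - s) := by
        rw [intervalIntegral.integral_const_mul, intervalIntegral.integral_comp_sub_left h T,
          intervalIntegral.integral_comp_add_right h (T - τ)]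
        congr 2 <;> ring
    _ ≤ ∫ s in τ / 2..τ, s * (T - s) / T ^ 2 * h (T - s) := by
        refine intervalIntegral.integral_mono_on (by linarith)
          (Continuous.intervalIntegrable (by fun_prop) _ _) (hweight.intervalIntegrable _ _)
          fun s hs => mul_le_mul_of_nonneg_right ?_ (hnn _)
        have hs' : τ / 2 * (T / 2) ≤ s * (T - s) :=
          mul_le_mul hs.1 (by linarith [hs.2]) (by positivity) (by linarith [hs.1])
        rw [div_le_div_iff₀ (by positivity) (by positivity)]
        nlinarith
    _ ≤ ∫ s in (0 : ℝ)..t, s * (T - s) / T ^ 2 * h (T - s) := by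
        refine intervalIntegral.integral_mono_interval (by linarith) (by linarith) (by linarith)
          ((MeasureTheory.ae_restrict_iff' measurableSet_Ioc).2 (Filter.Eventually.of_forall
            fun s hs => ?_)) (hweight.intervalIntegrable _ _)
        have := hnn (T - s)
        have : 0 ≤ s * (T - s) := mul_nonneg hs.1.le (by linarith [hs.2])
        positivity

lemma mul_norm_sq_le_exp_mul_integral_weight_mul_norm_sq_apply_exp {E F : Type*}
    [NormedAddCommGroup E] [NormedSpace ℝ E] [CompleteSpace E] [NormedAddCommGroup F]
    [NormedSpace ℝ F] {C : E →L[ℝ] F} {L : E →L[ℝ] E} {K T t τ c₂ : ℝ} (hK : 0 ≤ K)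
    (hτ : 0 < τ) (hτt : 2 * τ ≤ t) (htT : t ≤ T) (hc₂ : 2 * ‖L‖ ≤ c₂)
    (hobs : ∀ x, K * ‖x‖ ^ 2 ≤ ∫ u in (0 : ℝ)..τ / 2, ‖C (NormedSpace.exp (u • L) x)‖ ^ 2)
    (a : E) :
    τ / (4 * T) * K * ‖a‖ ^ 2 ≤ Real.exp (c₂ * T) *
      ∫ s in (0 : ℝ)..t, s * (T - s) / T ^ 2 * ‖C (NormedSpace.exp ((T - s) • L) a)‖ ^ 2 := by
  have hT : 0 < T := by linarith
  have hshift := mul_norm_sq_le_exp_mul_integral_norm_sq_apply_exp_add_smul hK hobs (T - τ) a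
  have hweight := mul_integral_comp_add_le_integral_mul_comp_sub
    (h := fun u => ‖C (NormedSpace.exp (u • L) a)‖ ^ 2)
    ((C.continuous.comp ((continuous_exp_smul L).clm_apply continuous_const)).norm.pow 2)
    (fun _ => by positivity) hτ hτt htT
  set I := ∫ u in (0 : ℝ)..τ / 2, ‖C (NormedSpace.exp ((u + (T - τ)) • L) a)‖ ^ 2
  have hI : 0 ≤ I := intervalIntegral.integral_nonneg (by linarith) fun _ _ => by positivity
  have hexp : Real.exp (2 * |T - τ| * ‖L‖) ≤ Real.exp (c₂ * T) := by
    rw [abs_of_nonneg (by linarith)]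
    exact Real.exp_le_exp.2 (by nlinarith [norm_nonneg L])
  calc τ / (4 * T) * K * ‖a‖ ^ 2 = τ / (4 * T) * (K * ‖a‖ ^ 2) := by ring
    _ ≤ τ / (4 * T) * (Real.exp (c₂ * T) * I) :=
        mul_le_mul_of_nonneg_left (hshift.trans (mul_le_mul_of_nonneg_right hexp hI))
          (by positivity)
    _ = Real.exp (c₂ * T) * (τ / (4 * T) * I) := by ring
    _ ≤ _ := by gcongr

lemma inner_intervalIntegral_smul_comp_adjoint_apply_self {E F : Type*} [NormedAddCommGroup E]
    [InnerProductSpace ℝ E] [CompleteSpace E] [NormedAddCommGroup F] [InnerProductSpace ℝ F]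
    [CompleteSpace F] {w : ℝ → ℝ} {S : ℝ → F →L[ℝ] E} (hw : Continuous w) (hS : Continuous S)
    (a b : ℝ) (x : E) :
    ⟪(∫ s in a..b, w s • (S s ∘L (S s).adjoint)) x, x⟫ =
      ∫ s in a..b, w s * ‖(S s).adjoint x‖ ^ 2 := by
  have hG : Continuous fun s => w s • (S s ∘L (S s).adjoint) :=
    hw.smul (hS.clm_comp (ContinuousLinearMap.adjoint.continuous.comp hS))
  rw [ContinuousLinearMap.intervalIntegral_apply (hG.intervalIntegrable a b) x, real_inner_comm,
    ← innerSL_apply_apply ℝ, ← ContinuousLinearMap.intervalIntegral_comp_comm _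
      ((hG.clm_apply continuous_const).intervalIntegrable a b)]
  refine intervalIntegral.integral_congr fun s _ => ?_
  rw [innerSL_apply_apply, smul_apply, ContinuousLinearMap.comp_apply,
    real_inner_smul_right, ← ContinuousLinearMap.adjoint_inner_left, real_inner_self_eq_norm_sq]

lemma inner_intervalIntegral_smul_exp_comp_adjoint_apply_self {E U : Type*}
    [NormedAddCommGroup E] [InnerProductSpace ℝ E] [CompleteSpace E] [NormedAddCommGroup U]
    [InnerProductSpace ℝ U] [CompleteSpace U] (A : E →L[ℝ] E) (B : U →L[ℝ] E) {w : ℝ → ℝ}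
    (hw : Continuous w) (T a b : ℝ) (x : E) :
    ⟪(∫ s in a..b, w s • (((NormedSpace.exp ((T - s) • A)).comp B).comp
        (B.adjoint.comp (NormedSpace.exp ((T - s) • A)).adjoint))) x, x⟫ =
      ∫ s in a..b, w s * ‖B.adjoint (NormedSpace.exp ((T - s) • A.adjoint) x)‖ ^ 2 := by
  have hexp_adjoint : ∀ s : ℝ, (NormedSpace.exp ((T - s) • A)).adjoint =
      NormedSpace.exp ((T - s) • A.adjoint) := fun s => by
    rw [← ContinuousLinearMap.star_eq_adjoint, NormedSpace.star_exp, star_smul, star_trivial,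
      ContinuousLinearMap.star_eq_adjoint]
  simp only [← ContinuousLinearMap.adjoint_comp]
  rw [inner_intervalIntegral_smul_comp_adjoint_apply_self
    (S := fun s => (NormedSpace.exp ((T - s) • A)).comp B) hw
    (((continuous_exp_smul A).comp (continuous_sub_left T)).clm_comp continuous_const)]
  simp only [ContinuousLinearMap.adjoint_comp, ContinuousLinearMap.comp_apply, hexp_adjoint]

theorem stmt8_general (m d k : ℕ)
    (A : EuclideanSpace ℝ (Fin m) →L[ℝ] EuclideanSpace ℝ (Fin m))
    (B₀ : EuclideanSpace ℝ (Fin d) →L[ℝ] EuclideanSpace ℝ (Fin m))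
    (hKalman : (⨆ j ∈ Finset.range (k + 1),
        LinearMap.range ((A ^ j).comp B₀ :
          EuclideanSpace ℝ (Fin d) →ₗ[ℝ] EuclideanSpace ℝ (Fin m))) = (⊤ : Submodule ℝ (EuclideanSpace ℝ (Fin m)))) :
    ∃ c₁ > (0:ℝ), ∃ c₂ > (0:ℝ), ∀ T : ℝ, 0 < T → ∀ t ∈ Set.Ioc (0:ℝ) T,
      ∀ a : EuclideanSpace ℝ (Fin m),
        (c₁ * min t 1 ^ (2 * (k + 1)) / (T * Real.exp (c₂ * T))) * ‖a‖ ^ 2 ≤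
          ⟪(∫ s in (0:ℝ)..t, (s * (T - s) / T ^ 2) •
              (((NormedSpace.exp ((T - s) • A)).comp B₀).comp
                (B₀.adjoint.comp (NormedSpace.exp ((T - s) • A)).adjoint))) a, a⟫ := by
  obtain ⟨c, hc, r₀, hr₀, hobs⟩ :=
    exists_pos_mul_pow_mul_norm_sq_le_integral_norm_sq_apply_exp_smul (C := B₀.adjoint)
      (L := A.adjoint) fun _ => eq_zero_of_forall_adjoint_apply_adjoint_pow_eq_zero hKalman
  set ρ := min r₀ 1 / 2 with hρ_def
  have hρ : 0 < ρ := by positivity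
  have hρ₀ : 2 * ρ ≤ r₀ := by rw [hρ_def]; linarith [min_le_left r₀ 1]
  have hρ₁ : 2 * ρ ≤ 1 := by rw [hρ_def]; linarith [min_le_right r₀ 1]
  refine ⟨c * ρ ^ (2 * (k + 1)) / 2 ^ (2 * k + 3), by positivity, 2 * ‖A‖ + 1, by positivity,
    fun T hT t ⟨ht0, htT⟩ a => ?_⟩
  set τ := ρ * min t 1
  have hτ : 0 < τ := mul_pos hρ (lt_min ht0 one_pos)
  have hτt : 2 * τ ≤ t := by nlinarith [min_le_left t 1, lt_min ht0 one_pos]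
  have hτr₀ : τ / 2 ≤ r₀ := by nlinarith [min_le_right t 1]
  have hc₂ : 2 * ‖A.adjoint‖ ≤ 2 * ‖A‖ + 1 := by rw [LinearIsometryEquiv.norm_map]; linarith
  rw [inner_intervalIntegral_smul_exp_comp_adjoint_apply_self A B₀ (by fun_prop) T 0 t a]
  calc c * ρ ^ (2 * (k + 1)) / 2 ^ (2 * k + 3) * min t 1 ^ (2 * (k + 1)) /
        (T * Real.exp ((2 * ‖A‖ + 1) * T)) * ‖a‖ ^ 2
      = τ / (4 * T) * (c * (τ / 2) ^ (2 * k + 1)) * ‖a‖ ^ 2 /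
          Real.exp ((2 * ‖A‖ + 1) * T) := by
        simp only [τ, div_pow, mul_pow]
        field_simp
        ring
    _ ≤ _ := (div_le_iff₀' (Real.exp_pos _)).2
        (mul_norm_sq_le_exp_mul_integral_weight_mul_norm_sq_apply_exp (by positivity) hτ hτt htT
          hc₂ (hobs (τ / 2) (by positivity) hτr₀) a)

/-- Theorem 4.2(1) of the paper.
Under the Kalman rank condition `Rank[B₀, AB₀, …, AᵏB₀] = m` with `0 ≤ k ≤ m−1`, there
are constants `c₁, c₂ > 0` depending only on `A`, `B₀`, `k` such that for all `T > 0`,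
`t ∈ (0,T]`, with `φ(s) = s(T−s)/T²`,
`∫₀ᵗ φ(s) e^{(T−s)A}B₀B₀*e^{(T−s)A*} ds ≥ (c₁ (t∧1)^{2(k+1)}/(T e^{c₂T})) I`. -/
theorem stmt8 (m d k : ℕ) (hm : 1 ≤ m) (hk : k ≤ m - 1)
    (A : EuclideanSpace ℝ (Fin m) →L[ℝ] EuclideanSpace ℝ (Fin m))
    (B₀ : EuclideanSpace ℝ (Fin d) →L[ℝ] EuclideanSpace ℝ (Fin m))
    (hKalman : (⨆ j ∈ Finset.range (k + 1),
        LinearMap.range ((A ^ j).comp B₀ :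
          EuclideanSpace ℝ (Fin d) →ₗ[ℝ] EuclideanSpace ℝ (Fin m))) = (⊤ : Submodule ℝ (EuclideanSpace ℝ (Fin m)))) :
    ∃ c₁ > (0:ℝ), ∃ c₂ > (0:ℝ), ∀ T : ℝ, 0 < T → ∀ t ∈ Set.Ioc (0:ℝ) T,
      ∀ a : EuclideanSpace ℝ (Fin m),
        (c₁ * min t 1 ^ (2 * (k + 1)) / (T * Real.exp (c₂ * T))) * ‖a‖ ^ 2 ≤
          ⟪(∫ s in (0:ℝ)..t, (s * (T - s) / T ^ 2) •
              (((NormedSpace.exp ((T - s) • A)).comp B₀).comp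
                (B₀.adjoint.comp (NormedSpace.exp ((T - s) • A)).adjoint))) a, a⟫ :=
  stmt8_general m d k A B₀ hKalman
end

section
/- Let A ∈ ℝ^{m×m}, B₀ ∈ ℝ^{m×d}, k ≥ 0 an integer, and c > 0 be such that ⟨(∫₀ᵗ e^{sA}B₀B₀*e^{sA*} ds) a, a⟩ ≥ c (min(t,1))^{2k+1} |a|² for all t > 0 and a ∈ ℝᵐ. Then there exist constants c₁, c₂ > 0, depending only on A, B₀, k and c, such that for every T > 0 and every t ∈ (0, T/2], ⟨(∫₀ᵗ (s(T−s)/T²) e^{(T−s)A}B₀B₀*e^{(T−s)A*} ds) a, a⟩ ≥ (c₁ t^{2(k+1)} / (4T e^{c₂T})) |a|² for all a ∈ ℝᵐ. -/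
/-!
On `[t/2, t]` the weight `s(T-s)/T²` is at least `t/(4T)`, so `⟪M_t a, a⟫` dominates
`t/(4T) ∫_{t/2}^t ‖B₀* e^{(T-s)A*} a‖² ds`. Factoring `e^{(T-s)A} = e^{(T-t)A} e^{(t-s)A}` and
substituting `u = t - s` turns this integral into `⟪U_{t/2} b, b⟫` with `b = e^{(T-t)A*} a`, which
the hypothesis bounds by `c min(t/2, 1)^{2k+1} ‖b‖²`. Since `‖a‖ ≤ e^{‖A‖T} ‖b‖` and
`min(x, 1) ≥ x e^{-x}`, one can take `c₁ = c / 2^{2k+1}` and `c₂ = 2‖A‖ + (2k+1)/4`.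
-/

open scoped RealInnerProductSpace
open MeasureTheory NormedSpace

section ExpSmul

variable {𝔸 : Type*} [NormedRing 𝔸] [NormedAlgebra ℝ 𝔸] [CompleteSpace 𝔸]

theorem continuous_exp_smul_s9 (x : 𝔸) : Continuous fun t : ℝ => exp (t • x) :=
  continuous_iff_continuousAt.mpr fun t => (hasDerivAt_exp_smul_const x t).continuousAt

theorem exp_add_smul_s9 (x : 𝔸) (u v : ℝ) :
    exp ((u + v) • x) = exp (u • x) * exp (v • x) := by
  have hball (y : 𝔸) : y ∈ Metric.eball (0 : 𝔸) (expSeries ℝ 𝔸).radius := by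
    simp [expSeries_radius_eq_top]
  rw [add_smul, exp_add_of_commute_of_mem_ball (((Commute.refl x).smul_left u).smul_right v)
    (hball _) (hball _)]

end ExpSmul

theorem norm_exp_le_exp_norm {E : Type*} [NormedAddCommGroup E] [NormedSpace ℝ E]
    (X : E →L[ℝ] E) : ‖exp X‖ ≤ Real.exp ‖X‖ := by
  rw [exp_eq_tsum (𝕂 := ℝ), Real.exp_eq_exp_ℝ, exp_eq_tsum_div]
  refine (norm_tsum_le_tsum_norm (norm_expSeries_summable' X)).trans ?_
  refine Summable.tsum_le_tsum (fun n => ?_) (norm_expSeries_summable' X)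
    (Real.summable_pow_div_factorial ‖X‖)
  rw [norm_smul, norm_inv, Real.norm_natCast, div_eq_inv_mul]
  cases n with
  | zero =>
    simp only [Nat.factorial_zero, Nat.cast_one, inv_one, pow_zero, one_mul, mul_one]
    exact ContinuousLinearMap.norm_id_le
  | succ n =>
    exact mul_le_mul_of_nonneg_left (norm_pow_le' X n.succ_ne_zero.bot_lt) (by positivity)

theorem div_four_mul_le_mul_sub_div_sq {t T s : ℝ} (ht : 0 < t) (htT : t ≤ T / 2)
    (hs : s ∈ Set.Icc (t / 2) t) :
    t / (4 * T) ≤ s * (T - s) / T ^ 2 := by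
  obtain ⟨hs₁, hs₂⟩ := hs
  have hT : 0 < T := by linarith
  rw [div_le_div_iff₀ (by positivity) (by positivity)]
  have : t / 2 * (T / 2) ≤ s * (T - s) := by gcongr <;> linarith
  nlinarith

theorem mul_intervalIntegral_le_intervalIntegral_weight_mul {g : ℝ → ℝ} (hg : Continuous g)
    (hg₀ : ∀ s, 0 ≤ g s) {t T : ℝ} (ht : 0 < t) (htT : t ≤ T / 2) :
    t / (4 * T) * ∫ s in (t / 2)..t, g s ≤ ∫ s in 0..t, s * (T - s) / T ^ 2 * g s := by
  have hφ : Continuous fun s : ℝ => s * (T - s) / T ^ 2 * g s := by fun_prop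
  rw [← intervalIntegral.integral_const_mul,
    ← intervalIntegral.integral_add_adjacent_intervals (b := t / 2)
      (hφ.intervalIntegrable _ _) (hφ.intervalIntegrable _ _)]
  have hlow : 0 ≤ ∫ s in 0..(t / 2), s * (T - s) / T ^ 2 * g s :=
    intervalIntegral.integral_nonneg (by linarith) fun s hs =>
      mul_nonneg (div_nonneg (mul_nonneg hs.1 (by linarith [hs.2])) (sq_nonneg T)) (hg₀ s)
  have hhigh : ∫ s in (t / 2)..t, t / (4 * T) * g s ≤
      ∫ s in (t / 2)..t, s * (T - s) / T ^ 2 * g s :=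
    intervalIntegral.integral_mono_on (by linarith)
      ((continuous_const.mul hg).intervalIntegrable _ _) (hφ.intervalIntegrable _ _) fun s hs =>
        mul_le_mul_of_nonneg_right (div_four_mul_le_mul_sub_div_sq ht htT hs) (hg₀ s)
  linarith

theorem mul_exp_neg_le_min_one {x : ℝ} (hx : 0 ≤ x) : x * Real.exp (-x) ≤ min x 1 := by
  refine le_min (mul_le_of_le_one_right hx (Real.exp_le_one_iff.mpr (by linarith))) ?_
  rw [Real.exp_neg, ← div_eq_mul_inv, div_le_one (Real.exp_pos x)]
  linarith [Real.add_one_le_exp x]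

theorem pow_mul_exp_neg_le_min_one_pow {x : ℝ} (hx : 0 ≤ x) (n : ℕ) :
    x ^ n * Real.exp (-(n * x)) ≤ min x 1 ^ n := by
  rw [neg_mul_eq_mul_neg, Real.exp_nat_mul, ← mul_pow]
  exact pow_le_pow_left₀ (by positivity) (mul_exp_neg_le_min_one hx) n

theorem div_exp_mul_sq_le_mul_min_pow_mul_sq {c t T α x y : ℝ} (n : ℕ) (hc : 0 ≤ c)
    (ht : 0 < t) (htT : t ≤ T / 2) (hx : 0 ≤ x) (hxy : x ≤ Real.exp (α * T) * y) :
    c / 2 ^ n * t ^ (n + 1) / (4 * T * Real.exp ((2 * α + n / 4) * T)) * x ^ 2 ≤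
      t / (4 * T) * (c * min (t / 2) 1 ^ n * y ^ 2) := by
  have hT : 0 < T := by linarith
  have hmin : (t / 2) ^ n * Real.exp (-(n * T / 4)) ≤ min (t / 2) 1 ^ n := by
    refine le_trans ?_ (pow_mul_exp_neg_le_min_one_pow (by positivity) n)
    gcongr
    nlinarith [n.cast_nonneg (α := ℝ)]
  have hy : Real.exp (-(2 * α * T)) * x ^ 2 ≤ y ^ 2 := by
    have : Real.exp (-(α * T)) * x ≤ y := by
      rw [Real.exp_neg, inv_mul_le_iff₀ (Real.exp_pos _)]; exact hxy
    calc Real.exp (-(2 * α * T)) * x ^ 2 = (Real.exp (-(α * T)) * x) ^ 2 := by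
          rw [mul_pow, ← Real.exp_nat_mul]; ring_nf
      _ ≤ y ^ 2 := pow_le_pow_left₀ (by positivity) this 2
  calc c / 2 ^ n * t ^ (n + 1) / (4 * T * Real.exp ((2 * α + n / 4) * T)) * x ^ 2
      = t / (4 * T) * (c * ((t / 2) ^ n * Real.exp (-(n * T / 4))) *
          (Real.exp (-(2 * α * T)) * x ^ 2)) := by
        rw [show (2 * α + n / 4) * T = 2 * α * T + n * T / 4 by ring, Real.exp_add,
          Real.exp_neg, Real.exp_neg, div_pow, pow_succ]
        field_simp
    _ ≤ t / (4 * T) * (c * min (t / 2) 1 ^ n * y ^ 2) := by gcongr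

section Hilbert

variable {E F : Type*} [NormedAddCommGroup E] [InnerProductSpace ℝ E] [CompleteSpace E]
  [NormedAddCommGroup F] [InnerProductSpace ℝ F] [CompleteSpace F]

theorem inner_intervalIntegral_apply_self {f : ℝ → E →L[ℝ] E} (hf : Continuous f)
    (x y : ℝ) (a : E) : ⟪(∫ s in x..y, f s) a, a⟫ = ∫ s in x..y, ⟪f s a, a⟫ := by
  have hcomm := (innerSL ℝ a).intervalIntegral_comp_comm
    ((hf.clm_apply (continuous_const (y := a))).intervalIntegrable (μ := volume) x y)
  simp only [innerSL_apply_apply] at hcomm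
  rw [ContinuousLinearMap.intervalIntegral_apply (hf.intervalIntegrable x y), real_inner_comm,
    ← hcomm]
  simp only [real_inner_comm a]

theorem inner_comp_adjoint_apply_self (C : F →L[ℝ] E) (a : E) :
    ⟪(C ∘L C.adjoint) a, a⟫ = ‖C.adjoint a‖ ^ 2 := by
  simpa using (C.adjoint.apply_norm_sq_eq_inner_adjoint_left a).symm

variable (A : E →L[ℝ] E) (B : F →L[ℝ] E)

theorem norm_le_exp_mul_norm_adjoint_exp_smul (r : ℝ) (a : E) :
    ‖a‖ ≤ Real.exp (‖A‖ * |r|) * ‖(exp (r • A)).adjoint a‖ := by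
  have hinv : (exp ((-r) • A)).adjoint ((exp (r • A)).adjoint a) = a := by
    have h1 : exp (r • A) * exp ((-r) • A) = 1 := by
      simpa using (exp_add_smul_s9 A r (-r)).symm
    rw [← ContinuousLinearMap.comp_apply, ← ContinuousLinearMap.adjoint_comp,
      ← ContinuousLinearMap.mul_def, h1, ContinuousLinearMap.adjoint_one, one_apply_eq_self]
  calc ‖a‖ = ‖(exp ((-r) • A)).adjoint ((exp (r • A)).adjoint a)‖ := by rw [hinv]
    _ ≤ ‖exp ((-r) • A)‖ * ‖(exp (r • A)).adjoint a‖ := by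
      rw [← LinearIsometryEquiv.norm_map ContinuousLinearMap.adjoint (exp ((-r) • A))]
      exact ContinuousLinearMap.le_opNorm _ _
    _ ≤ Real.exp (‖A‖ * |r|) * ‖(exp (r • A)).adjoint a‖ := by
      gcongr
      simpa [norm_smul, mul_comm] using norm_exp_le_exp_norm ((-r) • A)

noncomputable def gramianIntegrand (s : ℝ) : E →L[ℝ] E :=
  ((exp (s • A)).comp B).comp (B.adjoint.comp (exp (s • A)).adjoint)

theorem continuous_gramianIntegrand : Continuous (gramianIntegrand A B) := by
  have hexp := continuous_exp_smul_s9 A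
  have hadj := ContinuousLinearMap.adjoint.continuous.comp hexp
  exact (hexp.clm_comp continuous_const).clm_comp (continuous_const.clm_comp hadj)

theorem inner_gramianIntegrand_apply_self (s : ℝ) (a : E) :
    ⟪gramianIntegrand A B s a, a⟫ = ‖B.adjoint ((exp (s • A)).adjoint a)‖ ^ 2 := by
  rw [gramianIntegrand, ← ContinuousLinearMap.adjoint_comp, inner_comp_adjoint_apply_self,
    ContinuousLinearMap.adjoint_comp, ContinuousLinearMap.comp_apply]

theorem inner_gramianIntegrand_add_apply_self (r u : ℝ) (a : E) :
    ⟪gramianIntegrand A B (r + u) a, a⟫ =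
      ⟪gramianIntegrand A B u ((exp (r • A)).adjoint a), (exp (r • A)).adjoint a⟫ := by
  have hsplit : exp ((r + u) • A) = exp (r • A) * exp (u • A) := exp_add_smul_s9 A r u
  rw [inner_gramianIntegrand_apply_self, inner_gramianIntegrand_apply_self, hsplit,
    ContinuousLinearMap.mul_def, ContinuousLinearMap.adjoint_comp, ContinuousLinearMap.comp_apply]

theorem intervalIntegral_inner_gramianIntegrand_sub (x t T : ℝ) (a : E) :
    ∫ s in x..t, ⟪gramianIntegrand A B (T - s) a, a⟫ =
      ⟪(∫ u in 0..(t - x), gramianIntegrand A B u) ((exp ((T - t) • A)).adjoint a),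
        (exp ((T - t) • A)).adjoint a⟫ := by
  set b := (exp ((T - t) • A)).adjoint a
  have hshift (s : ℝ) :
      ⟪gramianIntegrand A B (T - s) a, a⟫ = ⟪gramianIntegrand A B (t - s) b, b⟫ := by
    rw [← inner_gramianIntegrand_add_apply_self, sub_add_sub_cancel]
  simp only [hshift]
  rw [intervalIntegral.integral_comp_sub_left (fun u => ⟪gramianIntegrand A B u b, b⟫) t,
    sub_self, inner_intervalIntegral_apply_self (continuous_gramianIntegrand A B)]

theorem mul_inner_gramian_le_inner_weighted_gramian {t T : ℝ} (ht : 0 < t) (htT : t ≤ T / 2)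
    (a : E) :
    t / (4 * T) * ⟪(∫ u in 0..(t / 2), gramianIntegrand A B u) ((exp ((T - t) • A)).adjoint a),
        (exp ((T - t) • A)).adjoint a⟫ ≤
      ⟪(∫ s in 0..t, (s * (T - s) / T ^ 2) • gramianIntegrand A B (T - s)) a, a⟫ := by
  have hG := continuous_gramianIntegrand A B
  rw [← sub_half, ← intervalIntegral_inner_gramianIntegrand_sub,
    inner_intervalIntegral_apply_self (by fun_prop)]
  simp only [smul_apply, real_inner_smul_left]
  refine mul_intervalIntegral_le_intervalIntegral_weight_mul (by fun_prop) (fun s => ?_) ht htT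
  rw [inner_gramianIntegrand_apply_self]
  positivity

end Hilbert

/-- the intermediate estimate in the proof of Theorem 4.2(1).
If the controllability Gramian satisfies `U_t = ∫₀ᵗ e^{sA}B₀B₀*e^{sA*} ds ≥ c(t∧1)^{2k+1} I`
for all `t > 0`, then for `M_t = ∫₀ᵗ (s(T−s)/T²) e^{(T−s)A}B₀B₀*e^{(T−s)A*} ds` one has
`M_t ≥ (c₁ t^{2(k+1)}/(4T e^{c₂T})) I` for all `T > 0` and `t ∈ (0, T/2]`. -/
theorem stmt9 (m d k : ℕ)
    (A : EuclideanSpace ℝ (Fin m) →L[ℝ] EuclideanSpace ℝ (Fin m))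
    (B₀ : EuclideanSpace ℝ (Fin d) →L[ℝ] EuclideanSpace ℝ (Fin m))
    (c : ℝ) (hc : 0 < c)
    (hU : ∀ t : ℝ, 0 < t → ∀ a : EuclideanSpace ℝ (Fin m),
      c * min t 1 ^ (2 * k + 1) * ‖a‖ ^ 2 ≤
        ⟪(∫ s in (0:ℝ)..t,
            (((NormedSpace.exp (s • A)).comp B₀).comp
              (B₀.adjoint.comp (NormedSpace.exp (s • A)).adjoint))) a, a⟫) :
    ∃ c₁ > (0:ℝ), ∃ c₂ > (0:ℝ), ∀ T : ℝ, 0 < T → ∀ t ∈ Set.Ioc (0:ℝ) (T / 2),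
      ∀ a : EuclideanSpace ℝ (Fin m),
        (c₁ * t ^ (2 * (k + 1)) / (4 * T * Real.exp (c₂ * T))) * ‖a‖ ^ 2 ≤
          ⟪(∫ s in (0:ℝ)..t, (s * (T - s) / T ^ 2) •
              (((NormedSpace.exp ((T - s) • A)).comp B₀).comp
                (B₀.adjoint.comp (NormedSpace.exp ((T - s) • A)).adjoint))) a, a⟫ := by
  refine ⟨c / 2 ^ (2 * k + 1), by positivity, 2 * ‖A‖ + ((2 * k + 1 : ℕ) : ℝ) / 4,
    by positivity, ?_⟩
  rintro T hT t ⟨ht, htT⟩ a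
  set b := (exp ((T - t) • A)).adjoint a
  have hab : ‖a‖ ≤ Real.exp (‖A‖ * T) * ‖b‖ := by
    refine (norm_le_exp_mul_norm_adjoint_exp_smul A (T - t) a).trans ?_
    gcongr
    rw [abs_of_nonneg (by linarith)]
    linarith
  calc c / 2 ^ (2 * k + 1) * t ^ (2 * (k + 1)) /
        (4 * T * Real.exp ((2 * ‖A‖ + ((2 * k + 1 : ℕ) : ℝ) / 4) * T)) * ‖a‖ ^ 2
      ≤ t / (4 * T) * (c * min (t / 2) 1 ^ (2 * k + 1) * ‖b‖ ^ 2) :=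
        div_exp_mul_sq_le_mul_min_pow_mul_sq (2 * k + 1) hc.le ht htT (norm_nonneg a) hab
    _ ≤ t / (4 * T) * ⟪(∫ u in 0..(t / 2), gramianIntegrand A B₀ u) b, b⟫ := by
        gcongr
        exact hU (t / 2) (by positivity) b
    _ ≤ _ := mul_inner_gramian_le_inner_weighted_gramian A B₀ ht htT a
end
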